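/- arXiv:2001.02481 — 5 statements merged into one kernel-verified Lean document; each statement's English description precedes it below -/
import Mathlib

section
/- Let G be a finite directed acyclic graph with a unique sink z, let F be any field, and suppose G has a reversible pebbling with time at most t and space at most s. Then the pebbling contradiction of G has a Nullstellensatz refutation over F of size at most t + 1 and degree at most s; moreover, this refutation can be taken to use the Boolean axioms x_v² − x_v with zero coefficients (all s_v = 0) and to involve only multilinear polynomials. -/
open MvPolynomial

/-- A finite directed graph. -/
structure FinDigraph where
  V : Type
  [instFintype : Fintype V]
  Edge : V → V → Prop

attribute [instance] FinDigraph.instFintype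

namespace FinDigraph

/-- The set of (immediate) predecessors of a vertex. -/
def pred (G : FinDigraph) (v : G.V) : Set G.V := {u | G.Edge u v}

/-- A directed graph is acyclic if no vertex reaches itself by a nonempty path. -/
def Acyclic (G : FinDigraph) : Prop := ∀ v, ¬ Relation.TransGen G.Edge v v

/-- A sink is a vertex with no outgoing edge. -/
def IsSink (G : FinDigraph) (z : G.V) : Prop := ∀ u, ¬ G.Edge z u

/-- `z` is the unique sink of `G`. -/
def UniqueSink (G : FinDigraph) (z : G.V) : Prop :=
  G.IsSink z ∧ ∀ v, G.IsSink v → v = z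

/-- One legal move of the reversible pebble game: place a pebble on a vertex all of whose
predecessors are pebbled, or remove a pebble from such a vertex. -/
def RevMove (G : FinDigraph) (P Q : Set G.V) : Prop :=
  ∃ v, G.pred v ⊆ P ∧
    ((v ∉ P ∧ Q = insert v P) ∨ (v ∈ P ∧ Q = P \ {v}))

/-- One legal move of the standard pebble game: place a pebble on a vertex all of whose
predecessors are pebbled, or remove a pebble from an arbitrary vertex. -/
def StdMove (G : FinDigraph) (P Q : Set G.V) : Prop :=
  (∃ v, G.pred v ⊆ P ∧ v ∉ P ∧ Q = insert v P) ∨ (∃ v, v ∈ P ∧ Q = P \ {v})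

/-- A reversible pebbling of `G` (with sink `z`) with time `t`. -/
def IsRevPebbling (G : FinDigraph) (z : G.V) (t : ℕ) (P : ℕ → Set G.V) : Prop :=
  P 0 = ∅ ∧ P t = ∅ ∧ (∃ i ≤ t, z ∈ P i) ∧ ∀ i < t, G.RevMove (P i) (P (i + 1))

/-- A standard pebbling of `G` (with sink `z`) with time `t`. -/
def IsStdPebbling (G : FinDigraph) (z : G.V) (t : ℕ) (P : ℕ → Set G.V) : Prop :=
  P 0 = ∅ ∧ P t = ∅ ∧ (∃ i ≤ t, z ∈ P i) ∧ ∀ i < t, G.StdMove (P i) (P (i + 1))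

/-- The space of a pebbling: the maximal number of pebbles in any configuration. -/
noncomputable def space (G : FinDigraph) (t : ℕ) (P : ℕ → Set G.V) : ℕ :=
  (Finset.range (t + 1)).sup fun i => (P i).ncard

end FinDigraph

/-- A Nullstellensatz certificate (refutation): `∑ i, r i * p i + ∑ j, s j * (X j ^ 2 - X j) = 1`. -/
def IsNSCert {F σ ι : Type} [Field F] [Fintype σ] [Fintype ι]
    (p r : ι → MvPolynomial σ F) (s : σ → MvPolynomial σ F) : Prop :=
  ∑ i, r i * p i + ∑ j, s j * (X j ^ 2 - X j) = 1

/-- The size of a Nullstellensatz refutation: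
`∑ i, m(r i) * m(p i) + ∑ j, 2 * m(s j)` where `m` counts monomials. -/
noncomputable def nsSize {F σ ι : Type} [Field F] [Fintype σ] [Fintype ι]
    (p r : ι → MvPolynomial σ F) (s : σ → MvPolynomial σ F) : ℕ :=
  ∑ i, (r i).support.card * (p i).support.card + ∑ j, 2 * (s j).support.card

/-- The degree of a Nullstellensatz refutation: the maximum of the degrees of the
polynomials `r i * p i` and `s j * (X j ^ 2 - X j)`. -/
noncomputable def nsDegree {F σ ι : Type} [Field F] [Fintype σ] [Fintype ι]
    (p r : ι → MvPolynomial σ F) (s : σ → MvPolynomial σ F) : ℕ :=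
  max (Finset.univ.sup fun i => (r i * p i).totalDegree)
    (Finset.univ.sup fun j => (s j * (X j ^ 2 - X j)).totalDegree)

/-- A polynomial is multilinear if every variable occurs with degree at most 1
in each of its monomials. -/
def Multilinear {F σ : Type} [Field F] (p : MvPolynomial σ F) : Prop :=
  ∀ m ∈ p.support, ∀ j, m j ≤ 1

namespace FinDigraph

/-- The axiom `A_v = (1 - x_v) * ∏_{u ∈ pred(v)} x_u` of the pebbling contradiction. -/
noncomputable def pebAxiom (F : Type) [Field F] (G : FinDigraph) (v : G.V) :
    MvPolynomial G.V F :=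
  (1 - X v) * ∏ u ∈ (G.pred v).toFinite.toFinset, X u

/-- The pebbling contradiction of `G` with sink `z`: the axioms `A_v` for every vertex `v`,
together with the sink axiom `A_sink = x_z`. -/
noncomputable def pebContradiction (F : Type) [Field F] (G : FinDigraph) (z : G.V) :
    Option G.V → MvPolynomial G.V F
  | none => X z
  | some v => G.pebAxiom F v

end FinDigraph

section PebAux

open MvPolynomial

variable {F ν : Type} [Field F] [Fintype ν]

/-- The monomial `∏_{v ∈ S} x_v` associated with a configuration `S`. -/
noncomputable def monOf (F : Type) [Field F] {ν : Type} [Fintype ν] (S : Set ν) :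
    MvPolynomial ν F :=
  ∏ v ∈ S.toFinite.toFinset, X v

lemma prodX_eq_monomial [DecidableEq ν] (A : Finset ν) :
    (∏ v ∈ A, (X v : MvPolynomial ν F)) = monomial (∑ v ∈ A, Finsupp.single v 1) 1 := by
  induction A using Finset.induction_on with
  | empty => simp [monomial_zero']
  | @insert a A ha ih =>
      rw [Finset.prod_insert ha, ih, Finset.sum_insert ha, ← pow_one (X a),
        X_pow_eq_monomial, monomial_mul, one_mul]

lemma multilinear_prodX [DecidableEq ν] (A : Finset ν) :
    Multilinear (∏ v ∈ A, (X v : MvPolynomial ν F)) := by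
  intro m hm j
  rw [prodX_eq_monomial] at hm
  have hm' : m = ∑ v ∈ A, Finsupp.single v 1 :=
    Finset.mem_singleton.1 (support_monomial_subset hm)
  subst hm'
  rw [Finsupp.finset_sum_apply]
  simp only [Finsupp.single_apply]
  rw [Finset.sum_ite_eq' A j fun _ => 1]
  split <;> simp

lemma card_support_prodX [DecidableEq ν] (A : Finset ν) :
    (∏ v ∈ A, (X v : MvPolynomial ν F)).support.card ≤ 1 := by
  rw [prodX_eq_monomial]
  exact (Finset.card_le_card support_monomial_subset).trans (by simp)

lemma totalDegree_prodX [DecidableEq ν] (A : Finset ν) :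
    (∏ v ∈ A, (X v : MvPolynomial ν F)).totalDegree ≤ A.card := by
  refine (totalDegree_finset_prod _ _).trans ?_
  simp [totalDegree_X]

lemma multilinear_monOf (S : Set ν) : Multilinear (monOf F S) := by
  classical
  exact multilinear_prodX _

lemma card_support_monOf (S : Set ν) : (monOf F S).support.card ≤ 1 := by
  classical
  exact card_support_prodX _

lemma totalDegree_monOf (S : Set ν) : (monOf F S).totalDegree ≤ S.ncard := by
  classical
  refine (totalDegree_prodX _).trans ?_
  rw [Set.ncard_eq_toFinset_card S S.toFinite]

lemma Multilinear.neg {p : MvPolynomial ν F} (h : Multilinear p) : Multilinear (-p) :=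
  fun m hm => h m (by rwa [support_neg] at hm)

lemma Multilinear.sub {p q : MvPolynomial ν F} (hp : Multilinear p) (hq : Multilinear q) :
    Multilinear (p - q) := by
  classical
  intro m hm j
  rcases Finset.mem_union.1 (support_sub _ p q hm) with h | h
  exacts [hp m h j, hq m h j]

lemma multilinear_sum {ι : Type} {A : Finset ι} {f : ι → MvPolynomial ν F}
    (h : ∀ i ∈ A, Multilinear (f i)) : Multilinear (∑ i ∈ A, f i) := by
  classical
  induction A using Finset.induction_on with
  | empty => intro m hm j; simp at hm
  | @insert a A ha ih =>
      rw [Finset.sum_insert ha]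
      intro m hm j
      rcases Finset.mem_union.1 (support_add hm) with hh | hh
      · exact h a (Finset.mem_insert_self a A) m hh j
      · exact ih (fun i hi => h i (Finset.mem_insert_of_mem hi)) m hh j

lemma card_support_sum_le {ι : Type} (A : Finset ι) (f : ι → MvPolynomial ν F) :
    (∑ i ∈ A, f i).support.card ≤ ∑ i ∈ A, (f i).support.card := by
  classical
  induction A using Finset.induction_on with
  | empty => simp
  | @insert a A ha ih =>
      rw [Finset.sum_insert ha, Finset.sum_insert ha]
      exact le_trans (Finset.card_le_card support_add)
        (le_trans (Finset.card_union_le _ _) (Nat.add_le_add le_rfl ih))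

lemma sum_range_telescope (f : ℕ → MvPolynomial ν F) (n : ℕ) :
    ∑ i ∈ Finset.range n, (f i - f (i + 1)) = f 0 - f n := by
  induction n with
  | zero => simp
  | succ n ih => rw [Finset.sum_range_succ, ih]; ring

lemma FinDigraph.revMove_symm {G : FinDigraph} (hacy : G.Acyclic) {S Q : Set G.V}
    (h : G.RevMove S Q) : G.RevMove Q S := by
  obtain ⟨v, hp, hcase⟩ := h
  have hvv : v ∉ G.pred v := fun hv => hacy v (Relation.TransGen.single hv)
  rcases hcase with ⟨hvS, rfl⟩ | ⟨hvS, rfl⟩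
  · exact ⟨v, hp.trans (Set.subset_insert _ _),
      Or.inr ⟨Set.mem_insert _ _, (Set.insert_diff_self_of_notMem hvS).symm⟩⟩
  · refine ⟨v, fun u hu => ⟨hp hu, fun he => hvv (by rwa [Set.mem_singleton_iff.1 he] at hu)⟩,
      Or.inl ⟨fun hv => hv.2 rfl, ?_⟩⟩
    rw [Set.insert_diff_singleton, Set.insert_eq_self.2 hvS]

lemma FinDigraph.moveCert {G : FinDigraph} (hacy : G.Acyclic) {F : Type} [Field F]
    {S Q : Set G.V} (h : G.RevMove S Q) :
    ∃ (v : G.V) (c : MvPolynomial G.V F),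
      c * G.pebAxiom F v = monOf F S - monOf F Q ∧
      c.support.card ≤ 1 ∧ Multilinear c := by
  classical
  obtain ⟨v, hp, hcase⟩ := h
  have hvv : v ∉ G.pred v := fun hv => hacy v (Relation.TransGen.single hv)
  rcases hcase with ⟨hvS, rfl⟩ | ⟨hvS, rfl⟩
  · refine ⟨v, monOf F (S \ G.pred v), ?_, card_support_monOf _, multilinear_monOf _⟩
    have hsub : (G.pred v).toFinite.toFinset ⊆ S.toFinite.toFinset := by
      intro u hu
      rw [Set.Finite.mem_toFinset] at *
      exact hp hu
    have hfs : (S \ G.pred v).toFinite.toFinset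
        = S.toFinite.toFinset \ (G.pred v).toFinite.toFinset := by
      ext u
      simp [Set.Finite.mem_toFinset, Set.mem_diff]
    have hmul : (monOf F (S \ G.pred v) : MvPolynomial G.V F)
        * ∏ u ∈ (G.pred v).toFinite.toFinset, X u = monOf F S := by
      simp only [monOf]
      rw [hfs, Finset.prod_sdiff hsub]
    have hQ : (monOf F (insert v S) : MvPolynomial G.V F) = X v * monOf F S := by
      have hins : (insert v S).toFinite.toFinset = insert v S.toFinite.toFinset := by
        ext u
        simp [Set.Finite.mem_toFinset, Set.mem_insert_iff]
      simp only [monOf]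
      rw [hins, Finset.prod_insert (by simp only [Set.Finite.mem_toFinset]; exact hvS)]
    calc monOf F (S \ G.pred v) * G.pebAxiom F v
        = (1 - X v) * (monOf F (S \ G.pred v) * ∏ u ∈ (G.pred v).toFinite.toFinset, X u) := by
          simp only [FinDigraph.pebAxiom]; ring
      _ = (1 - X v) * monOf F S := by rw [hmul]
      _ = monOf F S - monOf F (insert v S) := by rw [hQ]; ring
  · refine ⟨v, -monOf F ((S \ {v}) \ G.pred v), ?_, ?_, (multilinear_monOf _).neg⟩
    · have hpQ : G.pred v ⊆ S \ {v} := fun u hu =>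
        ⟨hp hu, fun he => hvv (by rwa [Set.mem_singleton_iff.1 he] at hu)⟩
      have hsub : (G.pred v).toFinite.toFinset ⊆ (S \ {v}).toFinite.toFinset := by
        intro u hu
        rw [Set.Finite.mem_toFinset] at *
        exact hpQ hu
      have hfs : ((S \ {v}) \ G.pred v).toFinite.toFinset
          = (S \ {v}).toFinite.toFinset \ (G.pred v).toFinite.toFinset := by
        ext u
        simp [Set.Finite.mem_toFinset, Set.mem_diff]
      have hmul : (monOf F ((S \ {v}) \ G.pred v) : MvPolynomial G.V F)
          * ∏ u ∈ (G.pred v).toFinite.toFinset, X u = monOf F (S \ {v}) := by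
        simp only [monOf]
        rw [hfs, Finset.prod_sdiff hsub]
      have hS : (monOf F S : MvPolynomial G.V F) = X v * monOf F (S \ {v}) := by
        have hins : S.toFinite.toFinset = insert v (S \ {v}).toFinite.toFinset := by
          ext u
          simp only [Set.Finite.mem_toFinset, Finset.mem_insert, Set.mem_diff,
            Set.mem_singleton_iff]
          constructor
          · intro hu
            by_cases hu' : u = v
            · exact Or.inl hu'
            · exact Or.inr ⟨hu, hu'⟩
          · rintro (rfl | ⟨hu, _⟩)
            · exact hvS
            · exact hu
        simp only [monOf]
        rw [hins, Finset.prod_insert (by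
          simp only [Set.Finite.mem_toFinset]
          exact fun h => h.2 rfl)]
      calc -monOf F ((S \ {v}) \ G.pred v) * G.pebAxiom F v
          = -((1 - X v) * ((monOf F ((S \ {v}) \ G.pred v) : MvPolynomial G.V F)
              * ∏ u ∈ (G.pred v).toFinite.toFinset, X u)) := by
            simp only [FinDigraph.pebAxiom]; ring
        _ = -((1 - X v) * monOf F (S \ {v})) := by rw [hmul]
        _ = X v * monOf F (S \ {v}) - monOf F (S \ {v}) := by ring
        _ = monOf F S - monOf F (S \ {v}) := by rw [hS]
    · rw [support_neg]
      exact card_support_monOf _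

lemma card_support_pebAxiom {G : FinDigraph} (hacy : G.Acyclic) {F : Type} [Field F] (w : G.V) :
    (G.pebAxiom F w).support.card ≤ 2 := by
  classical
  have hww : w ∉ (G.pred w).toFinite.toFinset := by
    rw [Set.Finite.mem_toFinset]
    exact fun hv => hacy w (Relation.TransGen.single hv)
  have hrw : G.pebAxiom F w = (∏ u ∈ (G.pred w).toFinite.toFinset, X u)
      - ∏ u ∈ insert w (G.pred w).toFinite.toFinset, X u := by
    rw [Finset.prod_insert hww]
    simp only [FinDigraph.pebAxiom]
    ring
  rw [hrw]
  refine le_trans (Finset.card_le_card (support_sub _ _ _)) ?_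
  refine le_trans (Finset.card_union_le _ _) ?_
  have h1 := card_support_prodX (F := F) (G.pred w).toFinite.toFinset
  have h2 := card_support_prodX (F := F) (insert w (G.pred w).toFinite.toFinset)
  omega

lemma FinDigraph.core {G : FinDigraph} (hacy : G.Acyclic) (z : G.V) {F : Type} [Field F]
    (t s n : ℕ) {P : ℕ → Set G.V} (h0 : P 0 = ∅)
    (hmv : ∀ i < n, G.RevMove (P i) (P (i + 1))) (hzn : z ∈ P n)
    (hsp : ∀ i ≤ n, (P i).ncard ≤ s) (hn : 2 * n ≤ t) :
    ∃ r : Option G.V → MvPolynomial G.V F,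
      IsNSCert (G.pebContradiction F z) r (fun _ => 0) ∧
      nsSize (G.pebContradiction F z) r (fun _ => 0) ≤ t + 1 ∧
      nsDegree (G.pebContradiction F z) r (fun _ => 0) ≤ s ∧
      (∀ i, Multilinear (r i)) ∧
      (∀ i, Multilinear (r i * G.pebContradiction F z i)) := by
  classical
  have hmc : ∀ i, i < n → ∃ (v : G.V) (c : MvPolynomial G.V F),
      c * G.pebAxiom F v = monOf F (P i) - monOf F (P (i + 1))
        ∧ c.support.card ≤ 1 ∧ Multilinear c :=
    fun i hi => FinDigraph.moveCert hacy (hmv i hi)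
  haveI : Inhabited G.V := ⟨z⟩
  choose! v c hc hcard hml using hmc
  set M : ℕ → MvPolynomial G.V F := fun i => monOf F (P i) with hM
  obtain ⟨r, hr0, hr1⟩ : ∃ r : Option G.V → MvPolynomial G.V F,
      r none = monOf F (P n \ {z}) ∧
      ∀ w, r (some w) = ∑ i ∈ (Finset.range n).filter fun i => v i = w, c i :=
    ⟨fun j => Option.rec (monOf F (P n \ {z}))
      (fun w => ∑ i ∈ (Finset.range n).filter fun i => v i = w, c i) j, rfl, fun _ => rfl⟩
  have hrnone : r none * G.pebContradiction F z none = M n := by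
    rw [hr0]
    show monOf F (P n \ {z}) * X z = monOf F (P n)
    have hfs : (P n \ {z}).toFinite.toFinset = (P n).toFinite.toFinset.erase z := by
      ext u
      simp [Set.Finite.mem_toFinset, Set.mem_diff, Set.mem_singleton_iff,
        Finset.mem_erase, and_comm]
    simp only [monOf]
    rw [hfs, mul_comm]
    exact Finset.mul_prod_erase _ _ ((Set.Finite.mem_toFinset _).2 hzn)
  have hrsome : ∀ w : G.V, r (some w) * G.pebContradiction F z (some w)
      = ∑ i ∈ (Finset.range n).filter (fun i => v i = w), (M i - M (i + 1)) := by
    intro w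
    rw [hr1]
    show (∑ i ∈ (Finset.range n).filter fun i => v i = w, c i) * G.pebAxiom F w = _
    rw [Finset.sum_mul]
    refine Finset.sum_congr rfl fun i hi => ?_
    obtain ⟨hi1, hi2⟩ := Finset.mem_filter.1 hi
    rw [← hi2]
    exact hc i (Finset.mem_range.1 hi1)
  refine ⟨r, ?_, ?_, ?_, ?_, ?_⟩
  · -- certificate
    simp only [IsNSCert, zero_mul, Finset.sum_const_zero, add_zero]
    rw [Fintype.sum_option, hrnone]
    have hfib : ∑ w : G.V, r (some w) * G.pebContradiction F z (some w) = M 0 - M n := by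
      calc ∑ w : G.V, r (some w) * G.pebContradiction F z (some w)
          = ∑ w : G.V, ∑ i ∈ (Finset.range n).filter (fun i => v i = w), (M i - M (i + 1)) :=
            Finset.sum_congr rfl fun w _ => hrsome w
        _ = ∑ i ∈ Finset.range n, (M i - M (i + 1)) := Finset.sum_fiberwise _ _ _
        _ = M 0 - M n := sum_range_telescope _ _
    rw [hfib]
    have hM0 : M 0 = 1 := by
      show monOf F (P 0) = 1
      have hemp : (P 0).toFinite.toFinset = ∅ := by
        ext u
        simp [Set.Finite.mem_toFinset, h0]
      rw [monOf, hemp, Finset.prod_empty]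
    rw [hM0]
    ring
  · -- size
    simp only [nsSize, support_zero, Finset.card_empty, mul_zero, Finset.sum_const_zero,
      add_zero]
    rw [Fintype.sum_option]
    have hXz : (G.pebContradiction F z none).support.card = 1 := by
      show (X z : MvPolynomial G.V F).support.card = 1
      rw [support_X]
      simp
    have h1 : (r none).support.card * (G.pebContradiction F z none).support.card ≤ 1 := by
      rw [hXz, mul_one, hr0]
      exact card_support_monOf _
    have h2 : ∑ w : G.V, (r (some w)).support.card
        * (G.pebContradiction F z (some w)).support.card ≤ 2 * n := by
      have hstep : ∀ w : G.V, (r (some w)).support.card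
          * (G.pebContradiction F z (some w)).support.card
          ≤ ((Finset.range n).filter fun i => v i = w).card * 2 := by
        intro w
        refine Nat.mul_le_mul ?_ ?_
        · rw [hr1]
          refine le_trans (card_support_sum_le _ _) ?_
          calc ∑ i ∈ (Finset.range n).filter fun i => v i = w, (c i).support.card
              ≤ ∑ _i ∈ (Finset.range n).filter fun i => v i = w, 1 :=
                Finset.sum_le_sum fun i hi =>
                  hcard i (Finset.mem_range.1 (Finset.mem_filter.1 hi).1)
            _ = ((Finset.range n).filter fun i => v i = w).card := by simp
        · exact card_support_pebAxiom hacy w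
      refine le_trans (Finset.sum_le_sum fun w _ => hstep w) ?_
      rw [← Finset.sum_mul]
      have hfib : ∑ w : G.V, ((Finset.range n).filter fun i => v i = w).card = n := by
        calc ∑ w : G.V, ((Finset.range n).filter fun i => v i = w).card
            = ∑ w : G.V, ∑ _i ∈ (Finset.range n).filter fun i => v i = w, 1 :=
              Finset.sum_congr rfl fun w _ => Finset.card_eq_sum_ones _
          _ = ∑ _i ∈ Finset.range n, 1 := Finset.sum_fiberwise _ _ _
          _ = n := by simp
      rw [hfib, mul_comm]
    omega
  · -- degree
    simp only [nsDegree]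
    refine max_le ?_ ?_
    · refine Finset.sup_le fun j _ => ?_
      match j with
      | none =>
          rw [hrnone]
          exact (totalDegree_monOf _).trans (hsp n le_rfl)
      | some w =>
          rw [hrsome w]
          refine (totalDegree_finset_sum _ _).trans (Finset.sup_le fun i hi => ?_)
          have hin : i < n := Finset.mem_range.1 (Finset.mem_filter.1 hi).1
          refine le_trans (totalDegree_sub _ _) (max_le ?_ ?_)
          · exact (totalDegree_monOf _).trans (hsp i (le_of_lt hin))
          · exact (totalDegree_monOf _).trans (hsp (i + 1) hin)
    · refine Finset.sup_le fun j _ => ?_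
      simp
  · -- multilinear r
    intro j
    match j with
    | none =>
        rw [hr0]
        exact multilinear_monOf _
    | some w =>
        rw [hr1]
        exact multilinear_sum fun i hi =>
          hml i (Finset.mem_range.1 (Finset.mem_filter.1 hi).1)
  · -- multilinear r * p
    intro j
    match j with
    | none =>
        rw [hrnone]
        exact multilinear_monOf _
    | some w =>
        rw [hrsome w]
        exact multilinear_sum fun i _ =>
          (multilinear_monOf _).sub (multilinear_monOf _)

end PebAux

/-- If a finite DAG `G` with unique sink `z` has a reversible pebbling with
time at most `t` and space at most `s`, then the pebbling contradiction of `G` has a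
Nullstellensatz refutation over any field `F` of size at most `t + 1` and degree at most `s`;
moreover, the refutation uses the Boolean axioms with zero coefficients and involves only
multilinear polynomials. -/
theorem pebbling_to_nullstellensatz (G : FinDigraph) (hacy : G.Acyclic) (z : G.V)
    (hz : G.UniqueSink z) (F : Type) [Field F] (t s : ℕ)
    (hpeb : ∃ t' ≤ t, ∃ P : ℕ → Set G.V, G.IsRevPebbling z t' P ∧ G.space t' P ≤ s) :
    ∃ r : Option G.V → MvPolynomial G.V F,
      IsNSCert (G.pebContradiction F z) r (fun _ => 0) ∧
      nsSize (G.pebContradiction F z) r (fun _ => 0) ≤ t + 1 ∧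
      nsDegree (G.pebContradiction F z) r (fun _ => 0) ≤ s ∧
      (∀ i, Multilinear (r i)) ∧
      (∀ i, Multilinear (r i * G.pebContradiction F z i)) := by
  classical
  obtain ⟨t', ht', P, ⟨h0, hT, ⟨i0, hi0, hzi0⟩, hmv⟩, hsp⟩ := hpeb
  have hsp' : (Finset.range (t' + 1)).sup (fun i => (P i).ncard) ≤ s := hsp
  have hcard : ∀ i ≤ t', (P i).ncard ≤ s := fun i hi =>
    le_trans (Finset.le_sup (f := fun i => (P i).ncard) (Finset.mem_range.2 (by omega))) hsp'
  set I : Finset ℕ := (Finset.range (t' + 1)).filter (fun i => z ∈ P i) with hI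
  have hIne : I.Nonempty := ⟨i0, Finset.mem_filter.2 ⟨Finset.mem_range.2 (by omega), hzi0⟩⟩
  set a := I.min' hIne with ha'
  set b := I.max' hIne with hb'
  obtain ⟨haR, haz⟩ := Finset.mem_filter.1 (I.min'_mem hIne)
  obtain ⟨hbR, hbz⟩ := Finset.mem_filter.1 (I.max'_mem hIne)
  have hab : a ≤ b := I.min'_le b (I.max'_mem hIne)
  have haT : a ≤ t' := by have := Finset.mem_range.1 haR; omega
  have hbT : b ≤ t' := by have := Finset.mem_range.1 hbR; omega
  by_cases hca : 2 * a ≤ t'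
  · exact FinDigraph.core hacy z t s a h0 (fun i hi => hmv i (by omega)) haz
      (fun i hi => hcard i (by omega)) (by omega)
  · refine FinDigraph.core hacy z t s (t' - b) (P := fun i => P (t' - i)) ?_ ?_ ?_ ?_ ?_
    · simpa using hT
    · intro i hi
      show G.RevMove (P (t' - i)) (P (t' - (i + 1)))
      have h1 : t' - i - 1 < t' := by omega
      have hstep := hmv (t' - i - 1) h1
      have h2 : t' - i - 1 + 1 = t' - i := by omega
      rw [h2] at hstep
      have h3 : t' - (i + 1) = t' - i - 1 := by omega
      rw [h3]
      exact FinDigraph.revMove_symm hacy hstep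
    · show z ∈ P (t' - (t' - b))
      have h4 : t' - (t' - b) = b := by omega
      rw [h4]
      exact hbz
    · intro i hi
      exact hcard (t' - i) (by omega)
    · omega
end

section
/- Let G be a finite directed acyclic graph with a unique sink z and let F be any field. If the pebbling contradiction of G has a Nullstellensatz refutation over F of size at most t + 1 and degree at most s, then G has a reversible pebbling with time at most t and space at most s. -/
open MvPolynomial

/-!
Write `q · A_v = Q_v - x_v · Q_v` with `Q_v = ∏_{u ∈ pred v} x_u · q`. For each monomial `μ` of
`Q_v` with `v ∉ supp μ`, pebbling `v` is a legal reversible move between `supp μ` and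
`supp μ ∪ {v}`; let `H` be the graph of these moves for `q = r_v`. Summing the coefficients of the
monomials whose support is reachable from `∅` in `H` is an additive map which is `1` on `1` and
vanishes on every `r_v · A_v` (the supports of `μ` and `x_v μ` are equal or adjacent in `H`) and
on every `s_j · (x_j² - x_j)` (`x_j μ` and `x_j² μ` have the same support). So it is nonzero on
`r_sink · x_z`, and some configuration containing the sink is reachable from `∅`. A path to it has
at most `∑_v m(r_v)` edges, which the size bound makes at most `t / 2`; walking it there and back
is the pebbling. Its configurations are supports of monomials of the `Q_v`, of degree less than
that of `r_v · A_v`, hence of size at most `s`.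
-/

namespace Finsupp

variable {σ : Type*}

lemma card_support_le_sum (μ : σ →₀ ℕ) : μ.support.card ≤ μ.sum fun _ e => e := by
  rw [Finset.card_eq_sum_ones, Finsupp.sum]
  exact Finset.sum_le_sum fun i hi => Nat.one_le_iff_ne_zero.2 (Finsupp.mem_support_iff.1 hi)

lemma support_single_one_add [DecidableEq σ] (v : σ) (μ : σ →₀ ℕ) :
    (single v 1 + μ).support = insert v μ.support := by
  rw [support_add_eq_union, support_single _ one_ne_zero, Finset.insert_eq]

end Finsupp

namespace MvPolynomial

variable {σ R : Type*}

section CommSemiring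

variable [CommSemiring R]

lemma mem_support_of_mem_support_X_mul {v : σ} {q : MvPolynomial σ R} {μ : σ →₀ ℕ}
    (hμ : μ ∈ (X v * q).support) : v ∈ μ.support := by
  classical
  obtain ⟨ν, -, rfl⟩ := Finset.mem_map.1 (support_X_mul v q ▸ hμ)
  simp [Finsupp.support_single_one_add]

lemma subset_support_of_mem_support_prod_X_mul (s : Finset σ) {q : MvPolynomial σ R}
    {μ : σ →₀ ℕ} (hμ : μ ∈ ((∏ u ∈ s, X u) * q).support) : s ⊆ μ.support := by
  classical
  induction s using Finset.induction_on generalizing μ with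
  | empty => exact Finset.empty_subset _
  | insert a s ha ih =>
    rw [Finset.prod_insert ha, mul_assoc, support_X_mul] at hμ
    obtain ⟨ν, hν, rfl⟩ := Finset.mem_map.1 hμ
    rw [addLeftEmbedding_apply, Finsupp.support_single_one_add]
    exact Finset.insert_subset_insert a (ih hν)

lemma card_support_prod_X_mul (s : Finset σ) (q : MvPolynomial σ R) :
    ((∏ u ∈ s, X u) * q).support.card = q.support.card := by
  classical
  induction s using Finset.induction_on with
  | empty => rw [Finset.prod_empty, one_mul]
  | insert a s ha ih => rw [Finset.prod_insert ha, mul_assoc, support_X_mul, Finset.card_map, ih]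

open Classical in
noncomputable def coeffSumOn (A : Set (σ →₀ ℕ)) : MvPolynomial σ R →+ R :=
  (Finsupp.liftAddHom fun μ => if μ ∈ A then AddMonoidHom.id R else 0).comp
    AddMonoidAlgebra.coeffAddEquiv.toAddMonoidHom

variable {A : Set (σ →₀ ℕ)}

open Classical in
lemma coeffSumOn_monomial (d : σ →₀ ℕ) (c : R) :
    coeffSumOn A (monomial d c) = if d ∈ A then c else 0 := by
  simp only [coeffSumOn, AddEquiv.toAddMonoidHom_eq_coe, AddMonoidHom.coe_comp,
    AddMonoidHom.coe_coe, Function.comp_apply, AddMonoidAlgebra.coeffAddEquiv_apply,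
    Finsupp.liftAddHom_apply, map_zero, sum_monomial_eq]
  split_ifs <;> rfl

open Classical in
lemma coeffSumOn_apply (q : MvPolynomial σ R) :
    coeffSumOn A q = ∑ μ ∈ q.support, if μ ∈ A then coeff μ q else 0 := by
  conv_lhs => rw [q.as_sum, map_sum]
  simp only [coeffSumOn_monomial]

lemma coeffSumOn_one (h : 0 ∈ A) : coeffSumOn A (1 : MvPolynomial σ R) = 1 := by
  rw [← C_1, ← monomial_zero', coeffSumOn_monomial, if_pos h]

lemma coeffSumOn_X_mul {v : σ} {q : MvPolynomial σ R}
    (h : ∀ μ ∈ q.support, Finsupp.single v 1 + μ ∈ A ↔ μ ∈ A) :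
    coeffSumOn A (X v * q) = coeffSumOn A q := by
  classical
  conv_lhs => rw [q.as_sum, Finset.mul_sum, map_sum]
  rw [coeffSumOn_apply]
  refine Finset.sum_congr rfl fun μ hμ => ?_
  rw [X, monomial_mul, one_mul, coeffSumOn_monomial, if_congr (h μ hμ) rfl rfl]

lemma exists_mem_support_of_coeffSumOn_ne_zero {q : MvPolynomial σ R}
    (h : coeffSumOn A q ≠ 0) : ∃ μ ∈ q.support, μ ∈ A := by
  rw [coeffSumOn_apply] at h
  obtain ⟨μ, hμ, hne⟩ := Finset.exists_ne_zero_of_sum_ne_zero h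
  exact ⟨μ, hμ, by_contra fun hA => hne (if_neg hA)⟩

end CommSemiring

section CommRing

variable [CommRing R]

lemma coeffSumOn_mul_X_sq_sub_X (C : Set σ → Prop) (q : MvPolynomial σ R) (j : σ) :
    coeffSumOn {μ | C μ.support} (q * (X j ^ 2 - X j)) = 0 := by
  classical
  have hsupp : ∀ μ ∈ (X j * q).support, (Finsupp.single j 1 + μ).support = μ.support :=
    fun μ hμ => by
      rw [Finsupp.support_single_one_add, Finset.insert_eq_of_mem
        (mem_support_of_mem_support_X_mul hμ)]
  rw [show q * (X j ^ 2 - X j) = X j * (X j * q) - X j * q by ring, map_sub,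
    coeffSumOn_X_mul fun μ hμ => by simp only [Set.mem_ofPred_eq, hsupp μ hμ], sub_self]

lemma totalDegree_one_sub_X [Nontrivial R] (v : σ) :
    (1 - X v : MvPolynomial σ R).totalDegree = 1 := by
  refine le_antisymm ((totalDegree_sub _ _).trans (by simp [totalDegree_X])) ?_
  calc 1 = (X v : MvPolynomial σ R).totalDegree := (totalDegree_X v).symm
    _ = (1 - (1 - X v) : MvPolynomial σ R).totalDegree := by rw [sub_sub_cancel]
    _ ≤ max (1 : MvPolynomial σ R).totalDegree (1 - X v : MvPolynomial σ R).totalDegree :=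
      totalDegree_sub _ _
    _ = (1 - X v : MvPolynomial σ R).totalDegree := by
      rw [totalDegree_one, max_eq_right (Nat.zero_le _)]

end CommRing

end MvPolynomial

namespace SimpleGraph.Walk

variable {V : Type*} {G : SimpleGraph V}

lemma forall_getVert_of_adj {P : V → Prop} (hadj : ∀ x y, G.Adj x y → P y) :
    ∀ {u v : V} (w : G.Walk u v), P u → ∀ i, P (w.getVert i)
  | _, _, .nil, hu, _ => hu
  | _, _, .cons _ _, hu, 0 => hu
  | _, _, .cons h q, _, i + 1 => forall_getVert_of_adj hadj q (hadj _ _ h) i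

lemma IsTrail.length_le_card [DecidableEq V] {u v : V} {p : G.Walk u v} (hp : p.IsTrail)
    {s : Finset (Sym2 V)} (hs : G.edgeSet ⊆ s) : p.length ≤ s.card := by
  rw [← p.length_edges, ← List.toFinset_card_of_nodup hp.edges_nodup]
  exact Finset.card_le_card fun e he => hs (p.edges_subset_edgeSet (List.mem_toFinset.1 he))

end SimpleGraph.Walk

lemma totalDegree_mul_le_nsDegree {F σ ι : Type} [Field F] [Fintype σ] [Fintype ι]
    (p r : ι → MvPolynomial σ F) (s : σ → MvPolynomial σ F) (i : ι) :
    (r i * p i).totalDegree ≤ nsDegree p r s :=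
  le_max_of_le_left (Finset.le_sup (f := fun i => (r i * p i).totalDegree) (Finset.mem_univ i))

namespace FinDigraph

variable (G : FinDigraph) {F : Type} [Field F]

noncomputable def predMul (v : G.V) (q : MvPolynomial G.V F) : MvPolynomial G.V F :=
  (∏ u ∈ (G.pred v).toFinite.toFinset, X u) * q

variable {G}

lemma mul_pebAxiom (v : G.V) (q : MvPolynomial G.V F) :
    q * G.pebAxiom F v = (1 - X v) * G.predMul v q := by
  rw [pebAxiom, predMul]
  ring

lemma pred_subset_of_mem_support_predMul {v : G.V} {q : MvPolynomial G.V F} {μ : G.V →₀ ℕ}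
    (hμ : μ ∈ (G.predMul v q).support) : G.pred v ⊆ μ.support := by
  simpa using Finset.coe_subset.2 (subset_support_of_mem_support_prod_X_mul _ hμ)

lemma sum_add_one_le_totalDegree_mul_pebAxiom {v : G.V} {q : MvPolynomial G.V F}
    {μ : G.V →₀ ℕ} (hμ : μ ∈ (G.predMul v q).support) :
    (μ.sum fun _ e => e) + 1 ≤ (q * G.pebAxiom F v).totalDegree := by
  have hX : (1 - X v : MvPolynomial G.V F) ≠ 0 := fun h => by
    simpa [h] using totalDegree_one_sub_X (R := F) v
  rw [mul_pebAxiom, totalDegree_mul_of_isDomain hX (support_nonempty.1 ⟨μ, hμ⟩),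
    totalDegree_one_sub_X, add_comm 1]
  exact Nat.add_le_add_right (le_totalDegree hμ) 1

lemma two_le_card_support_pebAxiom (v : G.V) : 2 ≤ (G.pebAxiom F v).support.card := by
  classical
  obtain ⟨D, hD⟩ : ∃ D, (∏ u ∈ (G.pred v).toFinite.toFinset, X u : MvPolynomial G.V F) =
      monomial D 1 := ⟨_, (monomial_sum_one _ _).symm⟩
  have hne : D ≠ Finsupp.single v 1 + D := by simp
  have heq : G.pebAxiom F v = monomial D 1 - monomial (Finsupp.single v 1 + D) 1 := by
    rw [pebAxiom, hD, sub_mul, one_mul, X, monomial_mul, one_mul]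
  refine Finset.one_lt_card.2 ⟨D, ?_, Finsupp.single v 1 + D, ?_, hne⟩ <;>
    simp [heq, mem_support_iff, coeff_monomial, hne, hne.symm]

open Classical in
noncomputable def certMoves (r : G.V → MvPolynomial G.V F) : Finset (Sym2 (Set G.V)) :=
  Finset.univ.biUnion fun v =>
    (G.predMul v (r v)).support.image fun μ => s(↑μ.support, insert v ↑μ.support)

noncomputable def moveGraph (r : G.V → MvPolynomial G.V F) : SimpleGraph (Set G.V) :=
  SimpleGraph.fromEdgeSet ↑(certMoves r)

variable {r : G.V → MvPolynomial G.V F}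

lemma edgeSet_moveGraph_subset : (moveGraph r).edgeSet ⊆ ↑(certMoves r) := by
  rw [moveGraph, SimpleGraph.edgeSet_fromEdgeSet]
  exact Set.sdiff_subset

lemma card_certMoves_le : (certMoves r).card ≤ ∑ v, (r v).support.card := by
  refine Finset.card_biUnion_le.trans (Finset.sum_le_sum fun v _ => ?_)
  exact Finset.card_image_le.trans (card_support_prod_X_mul _ _).le

lemma exists_of_moveGraph_adj {S T : Set G.V} (h : (moveGraph r).Adj S T) :
    ∃ v, ∃ μ ∈ (G.predMul v (r v)).support, v ∉ μ.support ∧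
      (S = μ.support ∧ T = insert v ↑μ.support ∨
        S = insert v ↑μ.support ∧ T = μ.support) := by
  rw [moveGraph, SimpleGraph.fromEdgeSet_adj] at h
  obtain ⟨hmem, hST⟩ := h
  obtain ⟨v, -, hv⟩ := Finset.mem_biUnion.1 hmem
  obtain ⟨μ, hμ, he⟩ := Finset.mem_image.1 hv
  have hST' := Sym2.eq_iff.1 he
  refine ⟨v, μ, hμ, fun hvμ => hST ?_, by tauto⟩
  have : insert v (μ.support : Set G.V) = μ.support := Set.insert_eq_of_mem hvμ
  rcases hST' with ⟨rfl, rfl⟩ | ⟨rfl, rfl⟩ <;> simp [this]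

lemma revMove_of_moveGraph_adj {S T : Set G.V} (h : (moveGraph r).Adj S T) : G.RevMove S T := by
  obtain ⟨v, μ, hμ, hv, ⟨rfl, rfl⟩ | ⟨rfl, rfl⟩⟩ := exists_of_moveGraph_adj h
  · exact ⟨v, pred_subset_of_mem_support_predMul hμ, Or.inl ⟨hv, rfl⟩⟩
  · exact ⟨v, (pred_subset_of_mem_support_predMul hμ).trans (Set.subset_insert _ _),
      Or.inr ⟨Set.mem_insert _ _, (Set.insert_sdiff_self_of_notMem hv).symm⟩⟩

lemma ncard_le_of_moveGraph_adj {s : ℕ} (hs : ∀ v, (r v * G.pebAxiom F v).totalDegree ≤ s)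
    {S T : Set G.V} (h : (moveGraph r).Adj S T) : T.ncard ≤ s := by
  obtain ⟨v, μ, hμ, -, hST⟩ := exists_of_moveGraph_adj h
  have hT : T.ncard ≤ μ.support.card + 1 := by
    rcases hST with ⟨-, rfl⟩ | ⟨-, rfl⟩
    · rw [← Set.ncard_coe_finset]
      exact Set.ncard_insert_le _ _
    · rw [Set.ncard_coe_finset]; exact Nat.le_succ _
  linarith [μ.card_support_le_sum, sum_add_one_le_totalDegree_mul_pebAxiom hμ, hs v]

lemma moveGraph_reachable_single_add_iff {v : G.V} {μ : G.V →₀ ℕ}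
    (hμ : μ ∈ (G.predMul v (r v)).support) {S : Set G.V} :
    (moveGraph r).Reachable S ↑(Finsupp.single v 1 + μ).support ↔
      (moveGraph r).Reachable S μ.support := by
  classical
  rw [Finsupp.support_single_one_add, Finset.coe_insert]
  by_cases hv : v ∈ μ.support
  · rw [Set.insert_eq_of_mem hv]
  have hadj : (moveGraph r).Adj μ.support (insert v ↑μ.support) := by
    rw [moveGraph, SimpleGraph.fromEdgeSet_adj]
    exact ⟨Finset.mem_biUnion.2 ⟨v, Finset.mem_univ v, Finset.mem_image.2 ⟨μ, hμ, rfl⟩⟩,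
      fun h => hv (Finset.mem_coe.1 (h ▸ Set.mem_insert v _))⟩
  exact ⟨fun h => h.trans hadj.reachable.symm, fun h => h.trans hadj.reachable⟩

variable {z : G.V}

theorem coeffSumOn_reachable_mul_X_sink {r : Option G.V → MvPolynomial G.V F}
    {s' : G.V → MvPolynomial G.V F} (hcert : IsNSCert (G.pebContradiction F z) r s') :
    coeffSumOn {μ | (moveGraph fun v => r (some v)).Reachable ∅ μ.support} (r none * X z) =
      1 := by
  set H := moveGraph fun v => r (some v)
  have haxiom : ∀ v,
      coeffSumOn {μ | H.Reachable ∅ μ.support} (r (some v) * G.pebAxiom F v) = 0 := fun v => by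
    rw [mul_pebAxiom, sub_mul, one_mul, map_sub,
      coeffSumOn_X_mul (q := G.predMul v (r (some v))) fun μ hμ =>
        moveGraph_reachable_single_add_iff (r := fun v => r (some v)) hμ, sub_self]
  have h := congrArg (coeffSumOn {μ | H.Reachable ∅ μ.support}) hcert
  rw [map_add, map_sum, map_sum, Fintype.sum_option, coeffSumOn_one (by simp)] at h
  simpa [pebContradiction, haxiom, coeffSumOn_mul_X_sq_sub_X] using h

lemma two_mul_sum_card_support_add_one_le_nsSize {r : Option G.V → MvPolynomial G.V F}
    (s' : G.V → MvPolynomial G.V F) (hr : r none ≠ 0) :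
    2 * ∑ v, (r (some v)).support.card + 1 ≤ nsSize (G.pebContradiction F z) r s' := by
  have hnone : 1 ≤ (r none).support.card * (G.pebContradiction F z none).support.card := by
    simpa [pebContradiction, support_X] using Finset.card_pos.2 (support_nonempty.2 hr)
  have hsome : ∑ v, (r (some v)).support.card * 2 ≤
      ∑ v, (r (some v)).support.card * (G.pebContradiction F z (some v)).support.card :=
    Finset.sum_le_sum fun v _ => Nat.mul_le_mul_left _ (two_le_card_support_pebAxiom v)
  rw [nsSize, Fintype.sum_option]
  rw [← Finset.sum_mul] at hsome
  omega

lemma isRevPebbling_getVert_append_reverse {H : SimpleGraph (Set G.V)}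
    (hH : ∀ S T, H.Adj S T → G.RevMove S T) {S : Set G.V} (p : H.Walk ∅ S) (hz : z ∈ S) :
    G.IsRevPebbling z (2 * p.length) (p.append p.reverse).getVert := by
  have hlen : (p.append p.reverse).length = 2 * p.length := by
    rw [SimpleGraph.Walk.length_append, SimpleGraph.Walk.length_reverse, two_mul]
  refine ⟨(p.append p.reverse).getVert_zero, hlen ▸ (p.append p.reverse).getVert_length,
    ⟨p.length, by omega, ?_⟩,
    fun i hi => hH _ _ ((p.append p.reverse).adj_getVert_succ (hlen ▸ hi))⟩
  simpa [SimpleGraph.Walk.getVert_append] using hz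

lemma space_getVert_le {H : SimpleGraph (Set G.V)} {s : ℕ}
    (hH : ∀ S T, H.Adj S T → T.ncard ≤ s) {S : Set G.V} (w : H.Walk ∅ S) (n : ℕ) :
    G.space n w.getVert ≤ s :=
  Finset.sup_le fun i _ => w.forall_getVert_of_adj hH (by simp) i

end FinDigraph

theorem nullstellensatz_to_pebbling_general (G : FinDigraph) (z : G.V) (F : Type) [Field F] (t s : ℕ)
    (href : ∃ (r : Option G.V → MvPolynomial G.V F) (s' : G.V → MvPolynomial G.V F),
      IsNSCert (G.pebContradiction F z) r s' ∧
      nsSize (G.pebContradiction F z) r s' ≤ t + 1 ∧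
      nsDegree (G.pebContradiction F z) r s' ≤ s) :
    ∃ t' ≤ t, ∃ P : ℕ → Set G.V, G.IsRevPebbling z t' P ∧ G.space t' P ≤ s := by
  classical
  obtain ⟨r, s', hcert, hsize, hdeg⟩ := href
  have hL := FinDigraph.coeffSumOn_reachable_mul_X_sink hcert
  have hr : r none ≠ 0 := fun h => by simp [h] at hL
  obtain ⟨μ, hμ, ⟨w⟩⟩ := exists_mem_support_of_coeffSumOn_ne_zero (hL ▸ one_ne_zero)
  have hz : z ∈ (μ.support : Set G.V) :=
    mem_support_of_mem_support_X_mul (mul_comm (r none) _ ▸ hμ)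
  have hlen : w.bypass.length ≤ ∑ v, (r (some v)).support.card :=
    (w.bypass_isPath.isTrail.length_le_card FinDigraph.edgeSet_moveGraph_subset).trans
      FinDigraph.card_certMoves_le
  have hsize' := FinDigraph.two_mul_sum_card_support_add_one_le_nsSize (z := z) s' hr
  have hdeg' : ∀ v, (r (some v) * G.pebAxiom F v).totalDegree ≤ s := fun v =>
    (totalDegree_mul_le_nsDegree (G.pebContradiction F z) r s' (some v)).trans hdeg
  exact ⟨2 * w.bypass.length, by omega, _,
    FinDigraph.isRevPebbling_getVert_append_reverse
      (fun _ _ => FinDigraph.revMove_of_moveGraph_adj) w.bypass hz,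
    FinDigraph.space_getVert_le (fun _ _ => FinDigraph.ncard_le_of_moveGraph_adj hdeg') _ _⟩

/-- If the pebbling contradiction of a finite DAG `G` with unique sink `z` has
a Nullstellensatz refutation over a field `F` of size at most `t + 1` and degree at most `s`,
then `G` has a reversible pebbling with time at most `t` and space at most `s`. -/
theorem nullstellensatz_to_pebbling (G : FinDigraph) (hacy : G.Acyclic) (z : G.V)
    (hz : G.UniqueSink z) (F : Type) [Field F] (t s : ℕ)
    (href : ∃ (r : Option G.V → MvPolynomial G.V F) (s' : G.V → MvPolynomial G.V F),
      IsNSCert (G.pebContradiction F z) r s' ∧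
      nsSize (G.pebContradiction F z) r s' ≤ t + 1 ∧
      nsDegree (G.pebContradiction F z) r s' ≤ s) :
    ∃ t' ≤ t, ∃ P : ℕ → Set G.V, G.IsRevPebbling z t' P ∧ G.space t' P ≤ s :=
  nullstellensatz_to_pebbling_general G z F t s href
end

section
/- Let G be a finite directed acyclic graph with a unique sink z and let F be any field. Then G has a reversible pebbling with time at most t and space at most s if and only if the pebbling contradiction of G has a Nullstellensatz refutation over F of size at most t + 1 and degree at most s. -/
/-!
Write `x_S = ∏ v ∈ S, x_v`, so that `A_v = (1 - x_v) x_{pred v}`. If `pred v ⊆ D` and `v ∉ D`, then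
`x_D - x_{D ∪ {v}} = x_{D ∖ pred v} · A_v`: a reversible move changes `x_P` by a one-monomial
multiple of an axiom. Summing over the moves of a pebbling up to a time at which `z` is pebbled
(or, with signs reversed, from that time to the end, whichever is shorter) gives
`∑ r_v A_v = 1 - x_S` with `z ∈ S`, and `x_{S ∖ {z}} · x_z` completes it to a refutation.

Conversely, each monomial `m` of each `r_v` gives an edge `{D, D ∪ {v}}`, `D = supp m ∪ pred v`,
of a graph on sets of vertices. The linear functional sending a monomial to `1` if its support is
reachable from `∅` in this graph and to `0` otherwise kills every `x_j² - x_j` and every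
`r_v A_v`, so applied to the refutation it shows that some reachable set contains `z`. A shortest
path to it uses each edge at most once, so its length is at most `∑ |r_v|`, and walking it there
and back is a reversible pebbling whose configurations have size at most the degree.
-/

open MvPolynomial

lemma Finsupp.card_support_le_degree {σ : Type*} (d : σ →₀ ℕ) : d.support.card ≤ d.degree := by
  rw [Finsupp.degree_apply, Finset.card_eq_sum_ones]
  exact Finset.sum_le_sum fun i hi => Nat.one_le_iff_ne_zero.mpr (Finsupp.mem_support_iff.mp hi)

namespace MvPolynomial

variable {σ R : Type*}

noncomputable def sqfreeExp (S : Finset σ) : σ →₀ ℕ := ∑ v ∈ S, Finsupp.single v 1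

lemma support_sqfreeExp (S : Finset σ) : (sqfreeExp S).support = S := by
  classical
  ext v
  simp [sqfreeExp, Finsupp.finsetSum_apply, Finsupp.single_apply]

lemma degree_sqfreeExp (S : Finset σ) : (sqfreeExp S).degree = S.card := by
  simp [sqfreeExp]

section CommSemiring

variable [CommSemiring R]

lemma monomial_sqfreeExp (S : Finset σ) : monomial (sqfreeExp S) (1 : R) = ∏ v ∈ S, X v :=
  monomial_sum_one S _

lemma totalDegree_prod_X [Nontrivial R] (S : Finset σ) :
    (∏ v ∈ S, X v : MvPolynomial σ R).totalDegree = S.card := by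
  rw [← monomial_sqfreeExp, totalDegree_monomial _ one_ne_zero, ← degree_sqfreeExp]
  rfl

lemma card_support_prod_X_le (S : Finset σ) :
    (∏ v ∈ S, X v : MvPolynomial σ R).support.card ≤ 1 := by
  rw [← monomial_sqfreeExp]
  exact (Finset.card_le_card (support_monomial_subset (R := R))).trans (Finset.card_singleton _).le

lemma constr_basisMonomials_monomial (χ : (σ →₀ ℕ) → R) (d : σ →₀ ℕ) :
    (basisMonomials σ R).constr R χ (monomial d 1) = χ d := by
  simpa only [coe_basisMonomials] using (basisMonomials σ R).constr_basis R χ d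

lemma constr_basisMonomials_mul_monomial (χ : (σ →₀ ℕ) → R) (p : MvPolynomial σ R)
    (b : σ →₀ ℕ) :
    (basisMonomials σ R).constr R χ (p * monomial b 1) =
      ∑ d ∈ p.support, coeff d p * χ (d + b) := by
  conv_lhs => rw [p.as_sum]
  rw [Finset.sum_mul, map_sum]
  refine Finset.sum_congr rfl fun d _ => ?_
  have hsmul : monomial (d + b) (coeff d p) = coeff d p • monomial (d + b) (1 : R) := by
    rw [smul_monomial, smul_eq_mul, mul_one]
  rw [monomial_mul, mul_one, hsmul, map_smul, constr_basisMonomials_monomial, smul_eq_mul]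

end CommSemiring

section CommRing

variable [CommRing R]

lemma totalDegree_prod_X_sub_prod_X_le [Nontrivial R] (S T : Finset σ) :
    (∏ v ∈ S, X v - ∏ v ∈ T, X v : MvPolynomial σ R).totalDegree ≤ max S.card T.card := by
  simpa only [totalDegree_prod_X] using
    totalDegree_sub (∏ v ∈ S, X v : MvPolynomial σ R) (∏ v ∈ T, X v)

lemma support_monomial_sub_monomial [Nontrivial R] [DecidableEq σ] {a b : σ →₀ ℕ} (h : a ≠ b) :
    (monomial a (1 : R) - monomial b 1).support = {a, b} := by
  ext d
  rw [mem_support_iff, coeff_sub, coeff_monomial, coeff_monomial, Finset.mem_insert,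
    Finset.mem_singleton]
  by_cases ha : a = d <;> by_cases hb : b = d <;> simp_all [eq_comm]

lemma constr_basisMonomials_mul_sub_eq_zero {χ : (σ →₀ ℕ) → R} {p : MvPolynomial σ R}
    {a b : σ →₀ ℕ} (h : ∀ d ∈ p.support, χ (d + a) = χ (d + b)) :
    (basisMonomials σ R).constr R χ (p * (monomial a 1 - monomial b 1)) = 0 := by
  rw [mul_sub, map_sub, constr_basisMonomials_mul_monomial, constr_basisMonomials_mul_monomial,
    sub_eq_zero]
  exact Finset.sum_congr rfl fun d hd => by rw [h d hd]

end CommRing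

end MvPolynomial

lemma nsDegree_le_iff {F σ ι : Type} [Field F] [Fintype σ] [Fintype ι]
    {p r : ι → MvPolynomial σ F} {s : σ → MvPolynomial σ F} {n : ℕ} :
    nsDegree p r s ≤ n ↔
      (∀ i, (r i * p i).totalDegree ≤ n) ∧ ∀ j, (s j * (X j ^ 2 - X j)).totalDegree ≤ n := by
  simp [nsDegree]

namespace FinDigraph

variable {G : FinDigraph}

noncomputable def predFinset (G : FinDigraph) (v : G.V) : Finset G.V :=
  (G.pred v).toFinite.toFinset

lemma mem_predFinset {u v : G.V} : u ∈ G.predFinset v ↔ G.Edge u v :=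
  Set.Finite.mem_toFinset _

lemma Acyclic.not_edge_self (h : G.Acyclic) (v : G.V) : ¬ G.Edge v v :=
  fun e => h v (.single e)

lemma ncard_le_space {t i : ℕ} (P : ℕ → Set G.V) (hi : i ≤ t) : (P i).ncard ≤ G.space t P :=
  Finset.le_sup (f := fun i => (P i).ncard) (Finset.mem_range_succ_iff.mpr hi)

section Moves

variable [DecidableEq G.V] {v : G.V} {D S T : Finset G.V}

lemma revMove_coe_of_sym2_eq (hpred : G.predFinset v ⊆ D) (hv : v ∉ D)
    (h : s(S, T) = s(D, insert v D)) : G.RevMove S T := by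
  have hpred' : G.pred v ⊆ D := fun u hu => hpred (mem_predFinset.mpr hu)
  rcases Sym2.eq_iff.mp h with ⟨rfl, rfl⟩ | ⟨rfl, rfl⟩
  · exact ⟨v, hpred', Or.inl ⟨by exact_mod_cast hv, by push_cast; rfl⟩⟩
  · refine ⟨v, hpred'.trans (by simp), Or.inr ⟨by simp, ?_⟩⟩
    push_cast
    exact (Set.insert_sdiff_self_of_notMem (by exact_mod_cast hv)).symm

lemma RevMove.exists_sym2_eq (hG : ∀ v, ¬ G.Edge v v) (h : G.RevMove S T) :
    ∃ v D, G.predFinset v ⊆ D ∧ v ∉ D ∧ s(S, T) = s(D, insert v D) := by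
  obtain ⟨v, hpred, ⟨hv, hT⟩ | ⟨hv, hT⟩⟩ := h
  · refine ⟨v, S, fun u hu => hpred (mem_predFinset.mp hu), by exact_mod_cast hv, ?_⟩
    rw [show T = insert v S by exact_mod_cast hT]
  · have hT' : T = S.erase v := by exact_mod_cast hT
    refine ⟨v, T, fun u hu => ?_, by simp [hT'], ?_⟩
    · rw [hT', Finset.mem_erase]
      exact ⟨by rintro rfl; exact hG u (mem_predFinset.mp hu), hpred (mem_predFinset.mp hu)⟩
    · rw [hT', Finset.insert_erase (by exact_mod_cast hv), Sym2.eq_swap]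

end Moves

section Axioms

variable {F : Type} [Field F]

lemma pebAxiom_eq (v : G.V) : G.pebAxiom F v = (1 - X v) * ∏ u ∈ G.predFinset v, X u := rfl

lemma pebAxiom_eq_monomial_sub (v : G.V) :
    G.pebAxiom F v = monomial (sqfreeExp (G.predFinset v)) 1 -
      monomial (sqfreeExp (G.predFinset v) + Finsupp.single v 1) 1 := by
  rw [← one_mul (1 : F), ← monomial_mul, one_mul, monomial_sqfreeExp, ← X, pebAxiom_eq]
  ring

variable [DecidableEq G.V]

lemma support_pebAxiom (v : G.V) :
    (G.pebAxiom F v).support =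
      {sqfreeExp (G.predFinset v), sqfreeExp (G.predFinset v) + Finsupp.single v 1} := by
  rw [pebAxiom_eq_monomial_sub, support_monomial_sub_monomial]
  simp

lemma card_support_pebAxiom (v : G.V) : (G.pebAxiom F v).support.card = 2 := by
  rw [support_pebAxiom, Finset.card_pair]
  simp

lemma totalDegree_pebAxiom (v : G.V) :
    (G.pebAxiom F v).totalDegree = (G.predFinset v).card + 1 := by
  rw [totalDegree, support_pebAxiom, Finset.sup_insert, Finset.sup_singleton]
  change max (sqfreeExp _).degree (sqfreeExp _ + _).degree = _
  simp [degree_sqfreeExp]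

lemma pebAxiom_ne_zero (v : G.V) : G.pebAxiom F v ≠ 0 := by
  rw [← support_nonempty, ← Finset.card_pos, card_support_pebAxiom]
  norm_num

lemma prod_X_sdiff_mul_pebAxiom {v : G.V} {D : Finset G.V} (hpred : G.predFinset v ⊆ D)
    (hv : v ∉ D) :
    (∏ u ∈ D \ G.predFinset v, X u) * G.pebAxiom F v = ∏ u ∈ D, X u - ∏ u ∈ insert v D, X u := by
  rw [pebAxiom_eq, mul_left_comm, Finset.prod_sdiff hpred, Finset.prod_insert hv]
  ring

lemma nsSize_pebContradiction (z : G.V) (r : Option G.V → MvPolynomial G.V F)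
    (s : G.V → MvPolynomial G.V F) :
    nsSize (G.pebContradiction F z) r s =
      (r none).support.card + 2 * ∑ v, (r (some v)).support.card +
        2 * ∑ j, (s j).support.card := by
  simp [nsSize, Fintype.sum_option, pebContradiction, card_support_pebAxiom, support_X,
    Finset.mul_sum, mul_comm]

end Axioms

section Forward

variable {F : Type} [Field F] [DecidableEq G.V] {S T : Finset G.V}

lemma RevMove.exists_mul_pebAxiom_eq (hG : ∀ v, ¬ G.Edge v v) (h : G.RevMove S T) :
    ∃ v, ∃ q : MvPolynomial G.V F,
      q.support.card ≤ 1 ∧ q * G.pebAxiom F v = ∏ u ∈ S, X u - ∏ u ∈ T, X u := by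
  obtain ⟨v, D, hpred, hv, h⟩ := h.exists_sym2_eq hG
  rcases Sym2.eq_iff.mp h with ⟨rfl, rfl⟩ | ⟨hS, hT⟩
  · exact ⟨v, _, card_support_prod_X_le _, prod_X_sdiff_mul_pebAxiom hpred hv⟩
  · rw [hS, hT]
    refine ⟨v, -∏ u ∈ D \ G.predFinset v, X u, ?_, ?_⟩
    · rw [support_neg]
      exact card_support_prod_X_le _
    · rw [neg_mul, prod_X_sdiff_mul_pebAxiom hpred hv, neg_sub]

lemma exists_pebAxiom_combination_of_revMoves (hG : ∀ v, ¬ G.Edge v v) {k s : ℕ}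
    (c : ℕ → Finset G.V) (hmove : ∀ i < k, G.RevMove (c i) (c (i + 1)))
    (hcard : ∀ i ≤ k, (c i).card ≤ s) :
    ∃ q : G.V → MvPolynomial G.V F,
      ∑ v, q v * G.pebAxiom F v = ∏ u ∈ c 0, X u - ∏ u ∈ c k, X u ∧
      ∑ v, (q v).support.card ≤ k ∧ ∀ v, (q v * G.pebAxiom F v).totalDegree ≤ s := by
  choose w q hq hqw using fun i : Fin k => (hmove i i.2).exists_mul_pebAxiom_eq (F := F) hG
  have hfiber : ∀ v, (∑ i with w i = v, q i) * G.pebAxiom F v =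
      ∑ i with w i = v, (∏ u ∈ c i, X u - ∏ u ∈ c (i + 1), X u) := by
    intro v
    rw [Finset.sum_mul]
    refine Finset.sum_congr rfl fun i hi => ?_
    rw [← (Finset.mem_filter.mp hi).2, hqw]
  refine ⟨fun v => ∑ i with w i = v, q i, ?_, ?_, fun v => ?_⟩
  · simp only [hfiber]
    rw [Finset.sum_fiberwise, Fin.sum_univ_eq_sum_range
      (fun i => ∏ u ∈ c i, X u - ∏ u ∈ c (i + 1), X u), Finset.sum_range_sub']
  · calc ∑ v, (∑ i with w i = v, q i).support.card
        ≤ ∑ v, ∑ i with w i = v, (q i).support.card := Finset.sum_le_sum fun v _ =>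
          (Finset.card_le_card support_sum).trans Finset.card_biUnion_le
      _ = ∑ i, (q i).support.card := Finset.sum_fiberwise _ _ _
      _ ≤ ∑ _i : Fin k, 1 := Finset.sum_le_sum fun i _ => hq i
      _ = k := by simp
  · rw [hfiber]
    refine (totalDegree_finsetSum _ _).trans (Finset.sup_le fun i _ => ?_)
    exact (totalDegree_prod_X_sub_prod_X_le _ _).trans (max_le (hcard _ i.2.le) (hcard _ i.2))

lemma IsRevPebbling.exists_pebAxiom_combination (hG : ∀ v, ¬ G.Edge v v) {z : G.V} {t : ℕ}
    {P : ℕ → Set G.V} (hP : G.IsRevPebbling z t P) :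
    ∃ (S : Finset G.V) (q : G.V → MvPolynomial G.V F), z ∈ S ∧ S.card ≤ G.space t P ∧
      ∑ v, q v * G.pebAxiom F v = 1 - ∏ u ∈ S, X u ∧ 2 * ∑ v, (q v).support.card ≤ t ∧
      ∀ v, (q v * G.pebAxiom F v).totalDegree ≤ G.space t P := by
  obtain ⟨h0, ht, ⟨j, hj, hz⟩, hmove⟩ := hP
  set c : ℕ → Finset G.V := fun i => (P i).toFinite.toFinset
  have hc : ∀ i, (c i : Set G.V) = P i := fun i => Set.Finite.coe_toFinset _
  have hcard : ∀ i ≤ t, (c i).card ≤ G.space t P := fun i hi => by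
    rw [← Set.ncard_coe_finset, hc]
    exact ncard_le_space P hi
  have hmove' : ∀ i < t, G.RevMove (c i) (c (i + 1)) := fun i hi => by
    rw [hc, hc]
    exact hmove i hi
  have hempty : ∀ i, P i = ∅ → ∏ u ∈ c i, X u = (1 : MvPolynomial G.V F) := fun i hi => by
    rw [show c i = ∅ by simpa [← Finset.coe_eq_empty, hc] using hi, Finset.prod_empty]
  refine ⟨c j, ?_⟩
  rcases le_or_gt (2 * j) t with hjt | hjt
  · obtain ⟨q, hsum, hsize, hdeg⟩ := exists_pebAxiom_combination_of_revMoves (F := F) hG c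
      (k := j) (fun i hi => hmove' i (by omega)) (fun i hi => hcard i (by omega))
    exact ⟨q, by simpa [c] using hz, hcard j hj, by rw [hsum, hempty 0 h0], by omega, hdeg⟩
  · obtain ⟨q, hsum, hsize, hdeg⟩ := exists_pebAxiom_combination_of_revMoves (F := F) hG
      (fun i => c (j + i)) (k := t - j) (fun i hi => hmove' (j + i) (by omega))
      (fun i hi => hcard (j + i) (by omega))
    refine ⟨-q, by simpa [c] using hz, hcard j hj, ?_, ?_, fun v => ?_⟩
    · simp only [Pi.neg_apply, neg_mul, Finset.sum_neg_distrib, hsum, add_zero,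
        Nat.add_sub_cancel' hj, hempty t ht, neg_sub]
    · simp only [Pi.neg_apply, support_neg]
      omega
    · simpa only [Pi.neg_apply, neg_mul, totalDegree_neg] using hdeg v

theorem IsRevPebbling.exists_nsRefutation (hG : ∀ v, ¬ G.Edge v v) {z : G.V} {t : ℕ}
    {P : ℕ → Set G.V} (hP : G.IsRevPebbling z t P) :
    ∃ (r : Option G.V → MvPolynomial G.V F) (s : G.V → MvPolynomial G.V F),
      IsNSCert (G.pebContradiction F z) r s ∧ nsSize (G.pebContradiction F z) r s ≤ t + 1 ∧
      nsDegree (G.pebContradiction F z) r s ≤ G.space t P := by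
  obtain ⟨S, q, hz, hS, hsum, hsize, hdeg⟩ := hP.exists_pebAxiom_combination (F := F) hG
  have hsink : (∏ u ∈ S.erase z, X u) * X z = (∏ u ∈ S, X u : MvPolynomial G.V F) := by
    rw [mul_comm, Finset.mul_prod_erase _ _ hz]
  refine ⟨fun o => o.elim (∏ u ∈ S.erase z, X u) q, 0, ?_, ?_, ?_⟩
  · simp [IsNSCert, Fintype.sum_option, pebContradiction, hsink, hsum]
  · have := card_support_prod_X_le (R := F) (S.erase z)
    simp only [nsSize_pebContradiction, Option.elim, Pi.zero_apply, support_zero,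
      Finset.card_empty, Finset.sum_const_zero, mul_zero, add_zero]
    omega
  · refine nsDegree_le_iff.mpr ⟨fun o => ?_, fun j => by simp⟩
    cases o with
    | none => simpa [pebContradiction, hsink, totalDegree_prod_X] using hS
    | some v => exact hdeg v

end Forward

section Backward

variable {F : Type} [Field F]

noncomputable def moveEdge (G : FinDigraph) [DecidableEq G.V] (r : G.V → MvPolynomial G.V F)
    (e : Σ v, (r v).support) : Sym2 (Finset G.V) :=
  s((e.2 : G.V →₀ ℕ).support ∪ G.predFinset e.1,
    insert e.1 ((e.2 : G.V →₀ ℕ).support ∪ G.predFinset e.1))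

noncomputable def configGraph (G : FinDigraph) [DecidableEq G.V] (r : G.V → MvPolynomial G.V F) :
    SimpleGraph (Finset G.V) :=
  SimpleGraph.fromEdgeSet (Set.range (G.moveEdge r))

variable [DecidableEq G.V] {r : G.V → MvPolynomial G.V F} {S T : Finset G.V}

lemma exists_of_configGraph_adj (h : (G.configGraph r).Adj S T) :
    ∃ v, ∃ d ∈ (r v).support, v ∉ d.support ∪ G.predFinset v ∧
      s(S, T) = s(d.support ∪ G.predFinset v, insert v (d.support ∪ G.predFinset v)) := by
  obtain ⟨⟨⟨v, d, hd⟩, he⟩, hST⟩ := (SimpleGraph.fromEdgeSet_adj _).mp h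
  refine ⟨v, d, hd, fun hv => hST ?_, he.symm⟩
  rw [moveEdge, Finset.insert_eq_of_mem hv] at he
  rcases Sym2.eq_iff.mp he.symm with ⟨h1, h2⟩ | ⟨h1, h2⟩ <;> exact h1.trans h2.symm

lemma revMove_of_configGraph_adj (h : (G.configGraph r).Adj S T) : G.RevMove S T := by
  obtain ⟨v, d, -, hv, h⟩ := exists_of_configGraph_adj h
  exact revMove_coe_of_sym2_eq Finset.subset_union_right hv h

lemma card_le_of_configGraph_adj (h : (G.configGraph r).Adj S T) :
    ∃ v, S.card ≤ (r v * G.pebAxiom F v).totalDegree := by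
  obtain ⟨v, d, hd, hv, h⟩ := exists_of_configGraph_adj h
  have hr : r v ≠ 0 := fun h0 => by simp [h0] at hd
  refine ⟨v, ?_⟩
  have hS : S.card ≤ (insert v (d.support ∪ G.predFinset v)).card := by
    rcases Sym2.eq_iff.mp h with ⟨rfl, -⟩ | ⟨rfl, -⟩
    exacts [Finset.card_le_card (Finset.subset_insert _ _), le_rfl]
  calc S.card ≤ (d.support ∪ G.predFinset v).card + 1 := by
        rwa [← Finset.card_insert_of_notMem hv]
    _ ≤ d.degree + (G.predFinset v).card + 1 := by
        gcongr
        exact (Finset.card_union_le _ _).trans (by gcongr; exact d.card_support_le_degree)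
    _ ≤ (r v).totalDegree + (G.pebAxiom F v).totalDegree := by
        rw [totalDegree_pebAxiom, ← add_assoc]
        gcongr
        exact le_totalDegree hd
    _ = (r v * G.pebAxiom F v).totalDegree :=
        (totalDegree_mul_of_isDomain hr (pebAxiom_ne_zero v)).symm

lemma configGraph_reachable_insert_iff {v : G.V} {d : G.V →₀ ℕ} (hd : d ∈ (r v).support) :
    (G.configGraph r).Reachable S (d.support ∪ G.predFinset v) ↔
      (G.configGraph r).Reachable S (insert v (d.support ∪ G.predFinset v)) := by
  by_cases heq : d.support ∪ G.predFinset v = insert v (d.support ∪ G.predFinset v)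
  · rw [← heq]
  · have hadj : (G.configGraph r).Adj _ _ :=
      (SimpleGraph.fromEdgeSet_adj _).mpr ⟨⟨⟨v, d, hd⟩, rfl⟩, heq⟩
    exact ⟨fun h => h.trans hadj.reachable, fun h => h.trans hadj.symm.reachable⟩

lemma exists_configGraph_walk_length_le (h : (G.configGraph r).Reachable S T) :
    ∃ p : (G.configGraph r).Walk S T, p.length ≤ ∑ v, (r v).support.card := by
  classical
  obtain ⟨p⟩ := h
  refine ⟨p.bypass, p.bypass_isPath.isTrail.length_le_card_edgeFinset.trans ?_⟩
  calc (G.configGraph r).edgeFinset.card ≤ (Finset.univ.image (G.moveEdge r)).card := by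
        refine Finset.card_le_card fun e he => ?_
        rw [SimpleGraph.mem_edgeFinset, configGraph, SimpleGraph.edgeSet_fromEdgeSet] at he
        obtain ⟨i, hi⟩ := he.1
        exact Finset.mem_image.mpr ⟨i, Finset.mem_univ _, hi⟩
    _ ≤ _ := Finset.card_image_le
    _ = ∑ v, (r v).support.card := by simp

theorem exists_configGraph_reachable_of_isNSCert {z : G.V} {r : Option G.V → MvPolynomial G.V F}
    {s : G.V → MvPolynomial G.V F} (hcert : IsNSCert (G.pebContradiction F z) r s) :
    ∃ d ∈ (r none).support,
      (G.configGraph (fun v => r (some v))).Reachable ∅ (d + Finsupp.single z 1).support := by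
  classical
  set Γ := G.configGraph (fun v => r (some v))
  set χ : (G.V →₀ ℕ) → F := fun d => if Γ.Reachable ∅ d.support then 1 else 0
  set L := (basisMonomials G.V F).constr F χ
  have hχ : ∀ {d e : G.V →₀ ℕ}, (Γ.Reachable ∅ d.support ↔ Γ.Reachable ∅ e.support) → χ d = χ e :=
    fun h => if_congr h rfl rfl
  have hbool : ∀ j, L (s j * (X j ^ 2 - X j)) = 0 := fun j => by
    rw [X_pow_eq_monomial, X]
    refine constr_basisMonomials_mul_sub_eq_zero fun d _ => hχ ?_
    simp only [Finsupp.support_add_eq_union, Finsupp.support_single _ two_ne_zero,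
      Finsupp.support_single _ one_ne_zero]
  have haxiom : ∀ v, L (r (some v) * G.pebAxiom F v) = 0 := fun v => by
    rw [pebAxiom_eq_monomial_sub]
    refine constr_basisMonomials_mul_sub_eq_zero fun d hd => hχ ?_
    simp only [← add_assoc, Finsupp.support_add_eq_union, support_sqfreeExp,
      Finsupp.support_single _ one_ne_zero, Finset.union_singleton]
    exact configGraph_reachable_insert_iff (r := fun v => r (some v)) hd
  have hone : L 1 = 1 := by
    rw [← C_1, C_apply, constr_basisMonomials_monomial]
    simp [χ]
  have hsink : L (r none * X z) = 1 := by
    simpa only [Fintype.sum_option, map_add, map_sum, pebContradiction, haxiom, hbool,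
      Finset.sum_const_zero, add_zero, hone] using congrArg L hcert
  rw [X, constr_basisMonomials_mul_monomial] at hsink
  obtain ⟨d, hd, hne⟩ := Finset.exists_ne_zero_of_sum_ne_zero (hsink ▸ one_ne_zero)
  refine ⟨d, hd, ?_⟩
  by_contra hreach
  simp [χ, hreach] at hne

lemma card_getVert_le {S : Finset G.V} (q : (G.configGraph r).Walk S ∅) {s : ℕ}
    (hs : ∀ v, (r v * G.pebAxiom F v).totalDegree ≤ s) (i : ℕ) : (q.getVert i).card ≤ s := by
  rcases lt_or_ge i q.length with hi | hi
  · obtain ⟨v, hv⟩ := card_le_of_configGraph_adj (q.adj_getVert_succ hi)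
    exact hv.trans (hs v)
  · simp [q.getVert_of_length_le hi]

lemma isRevPebbling_getVert {z : G.V} (q : (G.configGraph r).Walk ∅ ∅) {j : ℕ}
    (hj : j ≤ q.length) (hz : z ∈ q.getVert j) :
    G.IsRevPebbling z q.length fun i => q.getVert i :=
  ⟨by simp, by simp, ⟨j, hj, hz⟩, fun _ hi => revMove_of_configGraph_adj (q.adj_getVert_succ hi)⟩

theorem exists_revPebbling_of_nsRefutation {z : G.V} {t s : ℕ}
    {r : Option G.V → MvPolynomial G.V F} {s' : G.V → MvPolynomial G.V F}
    (hcert : IsNSCert (G.pebContradiction F z) r s')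
    (hsize : nsSize (G.pebContradiction F z) r s' ≤ t + 1)
    (hdeg : nsDegree (G.pebContradiction F z) r s' ≤ s) :
    ∃ t' ≤ t, ∃ P : ℕ → Set G.V, G.IsRevPebbling z t' P ∧ G.space t' P ≤ s := by
  obtain ⟨d, hd, hreach⟩ := exists_configGraph_reachable_of_isNSCert hcert
  obtain ⟨p, hp⟩ := exists_configGraph_walk_length_le hreach
  have hnone : 1 ≤ (r none).support.card := Finset.card_pos.mpr ⟨d, hd⟩
  rw [nsSize_pebContradiction] at hsize
  set q := p.append p.reverse
  have hlen : q.length = 2 * p.length := by simp [q, two_mul]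
  refine ⟨q.length, by omega, _, isRevPebbling_getVert q (j := p.length) (by omega) ?_,
    Finset.sup_le fun i _ => ?_⟩
  · rw [SimpleGraph.Walk.getVert_append', if_pos le_rfl, SimpleGraph.Walk.getVert_length]
    simp [Finsupp.support_add_eq_union]
  · rw [Set.ncard_coe_finset]
    exact card_getVert_le q (fun v => (nsDegree_le_iff.mp hdeg).1 (some v)) i

end Backward

end FinDigraph

theorem pebbling_iff_nullstellensatz_general (G : FinDigraph) (hacy : G.Acyclic) (z : G.V)
    (F : Type) [Field F] (t s : ℕ) :
    (∃ t' ≤ t, ∃ P : ℕ → Set G.V, G.IsRevPebbling z t' P ∧ G.space t' P ≤ s) ↔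
    (∃ (r : Option G.V → MvPolynomial G.V F) (s' : G.V → MvPolynomial G.V F),
      IsNSCert (G.pebContradiction F z) r s' ∧
      nsSize (G.pebContradiction F z) r s' ≤ t + 1 ∧
      nsDegree (G.pebContradiction F z) r s' ≤ s) := by
  classical
  constructor
  · rintro ⟨t', ht', P, hP, hspace⟩
    obtain ⟨r, s', hcert, hsize, hdeg⟩ := hP.exists_nsRefutation (F := F) hacy.not_edge_self
    exact ⟨r, s', hcert, by omega, hdeg.trans hspace⟩
  · rintro ⟨r, s', hcert, hsize, hdeg⟩
    exact FinDigraph.exists_revPebbling_of_nsRefutation hcert hsize hdeg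

/-- For any finite DAG `G` with unique sink `z` and any field `F`:
`G` has a reversible pebbling with time at most `t` and space at most `s` if and only if the
pebbling contradiction of `G` has a Nullstellensatz refutation over `F` of size at most `t + 1`
and degree at most `s`. -/
theorem pebbling_iff_nullstellensatz (G : FinDigraph) (hacy : G.Acyclic) (z : G.V)
    (hz : G.UniqueSink z) (F : Type) [Field F] (t s : ℕ) :
    (∃ t' ≤ t, ∃ P : ℕ → Set G.V, G.IsRevPebbling z t' P ∧ G.space t' P ≤ s) ↔
    (∃ (r : Option G.V → MvPolynomial G.V F) (s' : G.V → MvPolynomial G.V F),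
      IsNSCert (G.pebContradiction F z) r s' ∧
      nsSize (G.pebContradiction F z) r s' ≤ t + 1 ∧
      nsDegree (G.pebContradiction F z) r s' ≤ s) :=
  pebbling_iff_nullstellensatz_general G hacy z F t s
end

section
/- For all positive integers k and n, the line graph on n vertices has a reversible pebbling with space at most 2k·n^{1/k} and time at most 2^k·n. -/
open MvPolynomial

/-- The line graph on `n` vertices: the directed path `v_0 → v_1 → ⋯ → v_{n-1}`. -/
def lineGraph (n : ℕ) : FinDigraph :=
  { V := Fin n, Edge := fun i j => (j : ℕ) = (i : ℕ) + 1 }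

/-!
Bennett's strategy. A toggle of a segment of the path is a run that starts without pebbles on the
segment and ends with a single pebble on its last vertex. Suppose segments of length at most `L`
can be toggled with `s` pebbles in `τ` moves per vertex. Cut a segment of length at most
`(j + 1) * L` into at most `j + 1` blocks of length at most `L` and toggle them one after the
other, each on top of the pebbles left on the ends of the previous blocks: this sweep uses `j + s`
pebbles and `τ` moves per vertex. A sweep over all blocks but the last, a toggle of the last block
and the reversed sweep toggle a segment of length `(c + 1) * L` with `c + s` pebbles in `2 * τ`
moves per vertex, so segments of length `(c + 1) ^ k` are toggled with `k * c + 1` pebbles in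
`2 ^ k` moves per vertex. On the line graph with `n ≤ (c + 1) ^ k` vertices,
`c = ⌊n ^ (1 / k)⌋`, a sweep one level lower already pebbles the sink; running it and then its
reverse takes `k * c + 1 ≤ 2 * k * n ^ (1 / k)` pebbles and `2 ^ k * n` moves.
-/

namespace PathPebbling

open Set
open scoped symmDiff

/-- A reversible move of the path `0 → 1 → 2 → ⋯` restricted to `A`: a vertex of `A` whose
predecessor lies outside `A` counts as a source. -/
def Move (A P Q : Set ℕ) : Prop :=
  ∃ v ∈ A, (∀ u ∈ A, u + 1 = v → u ∈ P) ∧ Q = P ∆ {v}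

namespace Move

variable {A B D P Q : Set ℕ}

theorem symm (h : Move A P Q) : Move A Q P := by
  obtain ⟨v, hv, hpred, rfl⟩ := h
  refine ⟨v, hv, fun u hu huv => ?_, (symmDiff_symmDiff_cancel_right _ _).symm⟩
  simp only [mem_symmDiff, mem_singleton_iff]
  exact Or.inl ⟨hpred u hu huv, by omega⟩

theorem subset (h : Move A P Q) (hP : P ⊆ A) : Q ⊆ A := by
  obtain ⟨v, hv, -, rfl⟩ := h
  exact symmDiff_subset_union.trans (union_subset hP (singleton_subset_iff.mpr hv))

theorem union (h : Move A P Q) (hAB : A ⊆ B) (hAD : Disjoint A D)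
    (hD : ∀ u ∈ B, u ∉ A → u + 1 ∈ A → u ∈ D) : Move B (P ∪ D) (Q ∪ D) := by
  obtain ⟨v, hv, hpred, rfl⟩ := h
  have hvD : v ∉ D := hAD.notMem_of_mem_left hv
  refine ⟨v, hAB hv, fun u hu huv => ?_, ?_⟩
  · by_cases huA : u ∈ A
    · exact Or.inl (hpred u huA huv)
    · exact Or.inr (hD u hu huA (huv ▸ hv))
  · ext x
    by_cases hx : x = v
    · subst hx; simp [mem_symmDiff, hvD]
    · simp [mem_symmDiff, hx]

end Move

structure IsRun (A : Set ℕ) (s : ℕ) (X Y : Set ℕ) (t : ℕ) (P : ℕ → Set ℕ) : Prop where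
  start : P 0 = X
  finish : P t = Y
  move : ∀ i < t, Move A (P i) (P (i + 1))
  ncard_le : ∀ i ≤ t, (P i).ncard ≤ s

namespace IsRun

variable {A B D X Y Z : Set ℕ} {s t u : ℕ} {P Q : ℕ → Set ℕ}

theorem mono (h : IsRun A s X Y t P) {s' : ℕ} (hs : s ≤ s') : IsRun A s' X Y t P :=
  ⟨h.start, h.finish, h.move, fun i hi => (h.ncard_le i hi).trans hs⟩

theorem subset (h : IsRun A s X Y t P) (hX : X ⊆ A) : ∀ i ≤ t, P i ⊆ A
  | 0, _ => h.start ▸ hX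
  | i + 1, hi => (h.move i hi).subset (h.subset hX i (by omega))

theorem reverse (h : IsRun A s X Y t P) : IsRun A s Y X t (fun i => P (t - i)) where
  start := by simpa using h.finish
  finish := by simpa using h.start
  move i hi := by
    have := (h.move (t - (i + 1)) (by omega)).symm
    rwa [show t - (i + 1) + 1 = t - i by omega] at this
  ncard_le i _ := h.ncard_le _ (by omega)

theorem append (h₁ : IsRun A s X Y t P) (h₂ : IsRun A s Y Z u Q) :
    IsRun A s X Z (t + u) (fun i => if i ≤ t then P i else Q (i - t)) := by
  have hQ : ∀ i, t ≤ i → (if i ≤ t then P i else Q (i - t)) = Q (i - t) := by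
    intro i hi
    split_ifs with h
    · rw [show i = t by omega, Nat.sub_self, h₁.finish, h₂.start]
    · rfl
  refine ⟨by simp [h₁.start], by rw [hQ _ (by omega), Nat.add_sub_cancel_left, h₂.finish],
    fun i hi => ?_, fun i hi => ?_⟩
  · by_cases hit : i < t
    · simpa [hit.le, Nat.succ_le_of_lt hit] using h₁.move i hit
    · rw [hQ i (by omega), hQ (i + 1) (by omega), show i + 1 - t = i - t + 1 by omega]
      exact h₂.move _ (by omega)
  · by_cases hit : i ≤ t
    · simpa [hit] using h₁.ncard_le i hit
    · rw [hQ i (by omega)]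
      exact h₂.ncard_le _ (by omega)

theorem union (h : IsRun A s X Y t P) (hAB : A ⊆ B) (hAD : Disjoint A D)
    (hD : ∀ u ∈ B, u ∉ A → u + 1 ∈ A → u ∈ D) :
    IsRun B (s + D.ncard) (X ∪ D) (Y ∪ D) t (fun i => P i ∪ D) where
  start := by rw [h.start]
  finish := by rw [h.finish]
  move i hi := (h.move i hi).union hAB hAD hD
  ncard_le i hi := (ncard_union_le _ _).trans (Nat.add_le_add_right (h.ncard_le i hi) _)

theorem mono_Ico {a b c : ℕ} (h : IsRun (Ico a b) s X Y t P) (hbc : b ≤ c) :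
    IsRun (Ico a c) s X Y t P := by
  simpa using h.union (B := Ico a c) (D := ∅) (Ico_subset_Ico_right hbc)
    (disjoint_empty _) (fun u hu huA hu1 => by simp only [mem_Ico] at *; omega)

theorem extend {a b c s' : ℕ} (h₁ : IsRun (Ico a b) s ∅ Z t P) (hZ : b - 1 ∈ Z)
    (h₂ : IsRun (Ico b c) s' ∅ {c - 1} u Q) (hab : a ≤ b) (hbc : b ≤ c) :
    IsRun (Ico a c) (max s (s' + Z.ncard)) ∅ ({c - 1} ∪ Z) (t + u)
      (fun i => if i ≤ t then P i else Q (i - t) ∪ Z) := by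
  have hZA : Z ⊆ Ico a b := h₁.finish ▸ h₁.subset (empty_subset _) t le_rfl
  have hlift := h₂.union (B := Ico a c) (D := Z) (Ico_subset_Ico_left hab)
    (disjoint_left.mpr fun x hx hxZ => by have := hZA hxZ; simp only [mem_Ico] at *; omega)
    (fun v hv hvA hv1 => by
      obtain rfl : v = b - 1 := by simp only [mem_Ico] at *; omega
      exact hZ)
  rw [empty_union] at hlift
  exact ((h₁.mono_Ico hbc).mono (le_max_left _ _)).append (hlift.mono (le_max_right _ _))

end IsRun

def Toggles (L s τ : ℕ) : Prop :=
  ∀ a m, 0 < m → m ≤ L → ∃ t P, IsRun (Ico a (a + m)) s ∅ {a + m - 1} t P ∧ t ≤ τ * m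

theorem toggles_one : Toggles 1 1 1 := by
  intro a m hm hm1
  obtain rfl : m = 1 := by omega
  refine ⟨1, fun i => if i = 0 then ∅ else {a},
    ⟨rfl, by simp, fun i hi => ?_, fun i _ => ?_⟩, le_rfl⟩
  · obtain rfl : i = 0 := by omega
    exact ⟨a, by simp, fun u hu hua => by simp at hu; omega, (bot_symmDiff _).symm⟩
  · split_ifs <;> simp

namespace Toggles

variable {L s τ : ℕ}

theorem mono (h : Toggles L s τ) {s' τ' : ℕ} (hs : s ≤ s') (hτ : τ ≤ τ') : Toggles L s' τ' :=
  fun a m hm hmL =>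
    let ⟨t, P, hP, ht⟩ := h a m hm hmL
    ⟨t, P, hP.mono hs, ht.trans (Nat.mul_le_mul_right m hτ)⟩

theorem exists_sweep (h : Toggles L s τ) (j : ℕ) :
    ∀ a m, 0 < m → m ≤ (j + 1) * L → ∃ Z t P, IsRun (Ico a (a + m)) (j + s) ∅ Z t P ∧
      a + m - 1 ∈ Z ∧ Z.ncard ≤ j + 1 ∧ t ≤ τ * m := by
  induction j with
  | zero =>
    intro a m hm hmL
    obtain ⟨t, P, hP, ht⟩ := h a m hm (by simpa using hmL)
    exact ⟨_, t, P, hP.mono (by omega), rfl, by simp, ht⟩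
  | succ j ih =>
    intro a m hm hmL
    by_cases hmL' : m ≤ L
    · obtain ⟨t, P, hP, ht⟩ := h a m hm hmL'
      exact ⟨_, t, P, hP.mono (by omega), rfl, by simp, ht⟩
    have hL : 0 < L := Nat.pos_of_ne_zero fun hL => by rw [hL, mul_zero] at hmL; omega
    obtain ⟨m', rfl⟩ : ∃ m', m = m' + L := ⟨m - L, by omega⟩
    rw [add_mul, one_mul] at hmL
    obtain ⟨Z, t₁, P₁, hP₁, hZ, hZcard, ht₁⟩ := ih a m' (by omega) (by omega)
    obtain ⟨t₂, P₂, hP₂, ht₂⟩ := h (a + m') L hL le_rfl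
    rw [← add_assoc]
    refine ⟨_, _, _, (hP₁.extend hZ hP₂ (by omega) (by omega)).mono (by omega), by simp, ?_,
      by rw [Nat.mul_add]; omega⟩
    exact (ncard_union_le _ _).trans (by rw [ncard_singleton]; omega)

theorem succ (h : Toggles L s τ) (c : ℕ) : Toggles ((c + 1) * L) (c + s) (2 * τ) := by
  intro a m hm hmL
  by_cases hmL' : m ≤ L
  · exact (h.mono (by omega) (by omega)) a m hm hmL'
  have hL : 0 < L := Nat.pos_of_ne_zero fun hL => by rw [hL, mul_zero] at hmL; omega
  obtain ⟨m', rfl⟩ : ∃ m', m = m' + L := ⟨m - L, by omega⟩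
  have hc : c ≠ 0 := fun hc => by rw [hc, zero_add, one_mul] at hmL; omega
  obtain ⟨c, rfl⟩ : ∃ c', c = c' + 1 := ⟨c - 1, by omega⟩
  rw [add_mul, one_mul] at hmL
  obtain ⟨Z, t₁, P₁, hP₁, hZ, hZcard, ht₁⟩ := h.exists_sweep c a m' (by omega) (by omega)
  obtain ⟨t₂, P₂, hP₂, ht₂⟩ := h (a + m') L hL le_rfl
  have hundo := hP₁.reverse.union (B := Ico a (a + m' + L)) (D := {a + m' + L - 1})
    (Ico_subset_Ico_right (by omega))
    (disjoint_singleton_right.mpr (by simp only [mem_Ico]; omega))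
    (fun v hv hvA hv1 => by simp only [mem_Ico] at *; omega)
  rw [union_comm Z, empty_union] at hundo
  rw [← add_assoc]
  refine ⟨_, _, ((hP₁.extend hZ hP₂ (by omega) (by omega)).mono ?_).append (hundo.mono ?_), ?_⟩
  · omega
  · rw [ncard_singleton]; omega
  · rw [Nat.mul_add, mul_assoc, mul_assoc]; omega

end Toggles

theorem toggles_pow (c k : ℕ) : Toggles ((c + 1) ^ k) (k * c + 1) (2 ^ k) := by
  induction k with
  | zero => simpa using toggles_one
  | succ k ih =>
    rw [pow_succ', pow_succ', show (k + 1) * c + 1 = c + (k * c + 1) by ring]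
    exact ih.succ c

theorem exists_roundTrip (c k n : ℕ) (hn : 0 < n) (hnc : n ≤ (c + 1) ^ (k + 1)) :
    ∃ t P, IsRun (Iio n) ((k + 1) * c + 1) ∅ ∅ t P ∧ (∃ i ≤ t, n - 1 ∈ P i) ∧
      t ≤ 2 ^ (k + 1) * n := by
  obtain ⟨Z, t, P, hP, hZ, -, ht⟩ :=
    (toggles_pow c k).exists_sweep c 0 n hn (by rwa [← pow_succ'])
  simp only [zero_add] at hP hZ
  rw [show Ico 0 n = Iio n by ext; simp] at hP
  refine ⟨t + t, _, (hP.append hP.reverse).mono (by rw [add_mul, one_mul]; omega),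
    ⟨t, by omega, by simpa [hP.finish]⟩, by rw [pow_succ', mul_assoc]; omega⟩

theorem Move.revMove_lineGraph {n : ℕ} {P Q : Set ℕ} (h : Move (Iio n) P Q) :
    (lineGraph n).RevMove (Fin.val ⁻¹' P) (Fin.val ⁻¹' Q) := by
  obtain ⟨v, hv, hpred, rfl⟩ := h
  refine ⟨⟨v, hv⟩, fun u (hu : v = u.val + 1) => hpred u.val u.isLt hu.symm, ?_⟩
  by_cases hvP : v ∈ P
  · refine Or.inr ⟨hvP, ?_⟩
    show Fin.val ⁻¹' (P ∆ {v}) = (Fin.val ⁻¹' P \ {⟨v, hv⟩} : Set (Fin n))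
    ext x
    simp only [mem_preimage, mem_symmDiff, mem_singleton_iff, mem_sdiff, Fin.ext_iff]
    grind
  · refine Or.inl ⟨hvP, ?_⟩
    show Fin.val ⁻¹' (P ∆ {v}) = (insert ⟨v, hv⟩ (Fin.val ⁻¹' P) : Set (Fin n))
    ext x
    simp only [mem_preimage, mem_symmDiff, mem_singleton_iff, mem_insert_iff, Fin.ext_iff]
    grind

namespace IsRun

variable {n s t : ℕ} {Y : Set ℕ} {P : ℕ → Set ℕ}

theorem isRevPebbling_lineGraph (h : IsRun (Iio n) s ∅ ∅ t P) (z : Fin n)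
    (hz : ∃ i ≤ t, ↑z ∈ P i) : (lineGraph n).IsRevPebbling z t (fun i => Fin.val ⁻¹' P i) :=
  ⟨show (Fin.val ⁻¹' P 0 : Set (Fin n)) = ∅ by rw [h.start]; rfl,
    show (Fin.val ⁻¹' P t : Set (Fin n)) = ∅ by rw [h.finish]; rfl, hz,
    fun i hi => (h.move i hi).revMove_lineGraph⟩

theorem space_lineGraph_le (h : IsRun (Iio n) s ∅ Y t P) :
    (lineGraph n).space t (fun i => Fin.val ⁻¹' P i) ≤ s := by
  refine Finset.sup_le fun i hi => ?_
  have hi : i ≤ t := Nat.lt_succ_iff.mp (Finset.mem_range.mp hi)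
  show (Fin.val ⁻¹' P i : Set (Fin n)).ncard ≤ s
  rw [ncard_preimage_of_injective_subset_range Fin.val_injective
    (Fin.range_val ▸ h.subset (empty_subset _) i hi)]
  exact h.ncard_le i hi

end IsRun

end PathPebbling

theorem le_floor_rpow_one_div_add_one_pow (n k : ℕ) (hk : k ≠ 0) :
    n ≤ (⌊(n : ℝ) ^ ((1 : ℝ) / k)⌋₊ + 1) ^ k := by
  set x : ℝ := (n : ℝ) ^ ((1 : ℝ) / k) with hx
  have hxk : x ^ k = n := by rw [hx, one_div, Real.rpow_inv_natCast_pow n.cast_nonneg hk]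
  have : (n : ℝ) < ((⌊x⌋₊ + 1 : ℕ) : ℝ) ^ k := by
    rw [← hxk]
    push_cast
    exact pow_lt_pow_left₀ (Nat.lt_floor_add_one x) (by positivity) hk
  exact_mod_cast this.le

/-- For all positive integers `k` and `n`, the line graph on `n` vertices
has a reversible pebbling with space at most `2k * n^{1/k}` and time at most `2^k * n`. -/
theorem line_graph_reversible_pebbling (k n : ℕ) (hk : 1 ≤ k) (hn : 1 ≤ n) :
    ∃ (t : ℕ) (P : ℕ → Set (lineGraph n).V),
      (lineGraph n).IsRevPebbling ⟨n - 1, by omega⟩ t P ∧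
      ((lineGraph n).space t P : ℝ) ≤ 2 * (k : ℝ) * (n : ℝ) ^ ((1 : ℝ) / k) ∧
      t ≤ 2 ^ k * n := by
  obtain ⟨k, rfl⟩ : ∃ k', k = k' + 1 := ⟨k - 1, by omega⟩
  set x : ℝ := (n : ℝ) ^ ((1 : ℝ) / (k + 1 : ℕ))
  have hx : 1 ≤ x := Real.one_le_rpow (by exact_mod_cast hn) (by positivity)
  have hcx : (⌊x⌋₊ : ℝ) ≤ x := Nat.floor_le (zero_le_one.trans hx)
  obtain ⟨t, P, hP, hvisit, ht⟩ := PathPebbling.exists_roundTrip ⌊x⌋₊ k n hn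
    (le_floor_rpow_one_div_add_one_pow n (k + 1) k.succ_ne_zero)
  refine ⟨t, _, hP.isRevPebbling_lineGraph _ hvisit, ?_, ht⟩
  calc ((lineGraph n).space t _ : ℝ) ≤ ((k + 1) * ⌊x⌋₊ + 1 : ℕ) :=
        Nat.cast_le.mpr hP.space_lineGraph_le
    _ ≤ 2 * ((k + 1 : ℕ) : ℝ) * x := by push_cast; nlinarith
end

section
/- For n = 2^m with m ≥ 1, the bit-reversal permutation graph G_n on 2n vertices has reversible pebbling price at most 2·log n + 2. -/
open MvPolynomial

/-- Reversal of the `m`-bit binary representation of `i`. -/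
def bitRev (m i : ℕ) : ℕ :=
  ∑ j ∈ Finset.range m, if Nat.testBit i j then 2 ^ (m - 1 - j) else 0

/-- The bit-reversal permutation graph on `2 * 2^m` vertices: a bottom directed path
(`Sum.inl`), a top directed path (`Sum.inr`), and an edge from the `i`-th bottom vertex to the
`σ(i)`-th top vertex, where `σ` reverses the `m`-bit binary representation (0-indexed). -/
def BRGraph (m : ℕ) : FinDigraph where
  V := Fin (2 ^ m) ⊕ Fin (2 ^ m)
  Edge a b :=
    match a, b with
    | Sum.inl i, Sum.inl j => (j : ℕ) = (i : ℕ) + 1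
    | Sum.inr i, Sum.inr j => (j : ℕ) = (i : ℕ) + 1
    | Sum.inl i, Sum.inr j => (j : ℕ) = bitRev m (i : ℕ)
    | Sum.inr _, Sum.inl _ => False

/-- The unique sink of the bit-reversal permutation graph: the last vertex of the top path. -/
def brSink (m : ℕ) : (BRGraph m).V :=
  Sum.inr ⟨2 ^ m - 1, by have : 0 < 2 ^ m := (by positivity); omega⟩

/-!
Bennett's divide-and-conquer strategy pebbles any vertex of a path segment of at most `2 ^ n`
vertices, starting from any configuration in which the predecessor of the segment is pebbled,
with `n + 1` extra pebbles: pebble the last vertex `mid` of the first half, pebble the target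
from `mid`, then run the strategy for `mid` backwards. Running a strategy backwards is legal
because, in a graph without loops, the inverse of a reversible move is again a reversible move.

On the bottom path this costs `m + 1` pebbles. On the top path, placing a pebble on `y_k` is
itself a three-stage strategy: pebble `x_σ⁻¹(k)` along the bottom path, place `y_k`, and run the
bottom strategy backwards; it needs `m + 1` pebbles besides the current configuration. So the
top-path strategy pebbles the sink with `2 m + 2` pebbles, and running it backwards clears the
board.
-/

theorem Relation.ReflTransGen.exists_extend {α : Type*} {r : α → α → Prop} {b c : α}
    (hbc : Relation.ReflTransGen r b c) {t : ℕ} {P : ℕ → α} (hP : P t = b)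
    (hstep : ∀ i < t, r (P i) (P (i + 1))) :
    ∃ (t' : ℕ) (P' : ℕ → α), t ≤ t' ∧ P' t' = c ∧ (∀ i ≤ t, P' i = P i) ∧
      ∀ i < t', r (P' i) (P' (i + 1)) := by
  induction hbc with
  | refl => exact ⟨t, P, le_rfl, hP, fun _ _ => rfl, hstep⟩
  | @tail d e _ hde ih =>
    obtain ⟨t', P', htt', hP', hagree, hstep'⟩ := ih
    refine ⟨t' + 1, fun i => if i ≤ t' then P' i else e, by omega, by simp,
      fun i hi => by simp [show i ≤ t' by omega, hagree i hi], fun i hi => ?_⟩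
    rcases Nat.lt_or_eq_of_le (Nat.lt_succ_iff.mp hi) with hi | rfl
    · simpa [hi.le, Nat.succ_le_of_lt hi] using hstep' i hi
    · simpa [hP'] using hde

theorem bitRev_succ (m i : ℕ) : bitRev (m + 1) i = 2 * bitRev m i + (i.testBit m).toNat := by
  rw [bitRev, Finset.sum_range_succ, bitRev, Finset.mul_sum]
  congr 1
  · refine Finset.sum_congr rfl fun j hj => ?_
    rw [Finset.mem_range] at hj
    split_ifs
    · rw [← pow_succ']; congr 1; omega
    · rfl
  · cases i.testBit m <;> simp

theorem bitRev_eq_ofBits (m i : ℕ) :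
    bitRev m i = Nat.ofBits fun j : Fin m => i.testBit (m - 1 - j) := by
  induction m with
  | zero => rfl
  | succ m ih =>
    rw [bitRev_succ, Nat.ofBits_succ, ih]
    congr 3
    funext j
    simp only [Function.comp_apply, Fin.val_succ]
    congr 1
    omega

theorem bitRev_lt (m i : ℕ) : bitRev m i < 2 ^ m := by
  rw [bitRev_eq_ofBits]
  exact Nat.ofBits_lt_two_pow _

theorem testBit_bitRev (m i j : ℕ) :
    (bitRev m i).testBit j = (decide (j < m) && i.testBit (m - 1 - j)) := by
  rw [bitRev_eq_ofBits, Nat.testBit_ofBits]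
  split_ifs with h <;> simp [h]

theorem bitRev_bitRev {m i : ℕ} (hi : i < 2 ^ m) : bitRev m (bitRev m i) = i := by
  refine Nat.eq_of_testBit_eq fun j => ?_
  rw [testBit_bitRev, testBit_bitRev]
  by_cases hj : j < m
  · simp [hj, show m - 1 - j < m by omega, show m - 1 - (m - 1 - j) = j by omega]
  · have : i < 2 ^ j := hi.trans_le (Nat.pow_le_pow_right two_pos (by omega))
    simp [hj, Nat.testBit_lt_two_pow this]

namespace FinDigraph

variable {G : FinDigraph} {s t : ℕ} {P Q R : Set G.V}

def BoundedRevMove (G : FinDigraph) (s : ℕ) (P Q : Set G.V) : Prop :=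
  G.RevMove P Q ∧ P.ncard ≤ s ∧ Q.ncard ≤ s

def RevReach (G : FinDigraph) (s : ℕ) : Set G.V → Set G.V → Prop :=
  Relation.ReflTransGen (G.BoundedRevMove s)

theorem RevMove.symm (hG : ∀ v, ¬ G.Edge v v) (h : G.RevMove P Q) : G.RevMove Q P := by
  obtain ⟨v, hv, ⟨hvP, rfl⟩ | ⟨hvP, rfl⟩⟩ := h
  · exact ⟨v, hv.trans (Set.subset_insert _ _),
      .inr ⟨Set.mem_insert _ _, (Set.insert_sdiff_self_of_notMem hvP).symm⟩⟩
  · refine ⟨v, fun u hu => ⟨hv hu, ?_⟩,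
      .inl ⟨fun h => h.2 rfl, (Set.insert_sdiff_self_of_mem hvP).symm⟩⟩
    rintro rfl
    exact hG u hu

theorem RevReach.mono (hst : s ≤ t) (h : G.RevReach s P Q) : G.RevReach t P Q :=
  Relation.ReflTransGen.mono (fun _ _ ⟨hm, hP, hQ⟩ => ⟨hm, hP.trans hst, hQ.trans hst⟩) _ _ h

theorem RevReach.trans (hPQ : G.RevReach s P Q) (hQR : G.RevReach s Q R) :
    G.RevReach s P R :=
  Relation.ReflTransGen.trans hPQ hQR

theorem RevReach.symm (hG : ∀ v, ¬ G.Edge v v) (h : G.RevReach s P Q) : G.RevReach s Q P :=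
  Relation.ReflTransGen.mono (fun _ _ ⟨hm, hP, hQ⟩ => ⟨hm.symm hG, hQ, hP⟩) _ _
    (Relation.reflTransGen_swap.mpr h)

theorem revReach_insert {v : G.V} (hv : G.pred v ⊆ P) (hs : (insert v P).ncard ≤ s) :
    G.RevReach s P (insert v P) := by
  by_cases hvP : v ∈ P
  · rw [Set.insert_eq_of_mem hvP]
    exact Relation.ReflTransGen.refl
  · exact .single ⟨⟨v, hv, .inl ⟨hvP, rfl⟩⟩,
      (Set.ncard_le_ncard (Set.subset_insert _ _)).trans hs, hs⟩

theorem exists_isRevPebbling_of_revReach (hG : ∀ v, ¬ G.Edge v v) {z : G.V}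
    (hQ : G.RevReach s ∅ Q) (hz : z ∈ Q) :
    ∃ (t : ℕ) (P : ℕ → Set G.V), G.IsRevPebbling z t P ∧ G.space t P ≤ s := by
  obtain ⟨t₁, P₁, -, hP₁, hP₁0, hstep₁⟩ :=
    hQ.exists_extend (t := 0) (P := fun _ => ∅) rfl (by simp)
  obtain ⟨t₂, P₂, ht, hP₂, hP₂1, hstep₂⟩ := (hQ.symm hG).exists_extend hP₁ hstep₁
  refine ⟨t₂, P₂, ⟨?_, hP₂, ⟨t₁, ht, ?_⟩, fun i hi => (hstep₂ i hi).1⟩, ?_⟩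
  · rw [hP₂1 0 (Nat.zero_le _), hP₁0 0 le_rfl]
  · rwa [hP₂1 t₁ le_rfl, hP₁]
  · refine Finset.sup_le fun i hi => ?_
    rcases Nat.lt_or_eq_of_le (Nat.lt_succ_iff.mp (Finset.mem_range.mp hi)) with hi | rfl
    · exact (hstep₂ i hi).2.1
    · simp [hP₂]

theorem revReach_insert_path (hG : ∀ v, ¬ G.Edge v v) {N e : ℕ} (f : Fin N → G.V)
    (hf : ∀ (k : Fin N) (c : Set G.V), (∀ l : Fin N, (k : ℕ) = l + 1 → f l ∈ c) →
      G.RevReach (c.ncard + 1 + e) c (insert (f k) c))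
    (n : ℕ) (i j : Fin N) (c : Set G.V) (hij : i ≤ j) (hj : (j : ℕ) < i + 2 ^ n)
    (hc : ∀ l : Fin N, (i : ℕ) = l + 1 → f l ∈ c) :
    G.RevReach (c.ncard + n + 1 + e) c (insert (f j) c) := by
  rw [Fin.le_def] at hij
  induction n generalizing i j c with
  | zero =>
    obtain rfl : i = j := Fin.ext (by simp at hj; omega)
    simpa using hf i c hc
  | succ n ih =>
    by_cases hshort : (j : ℕ) < i + 2 ^ n
    · exact (ih i j c hij hshort hc).mono (by omega)
    let mid : Fin N := ⟨i + 2 ^ n - 1, by omega⟩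
    have hmid : (mid : ℕ) < i + 2 ^ n := by simp only [mid]; omega
    have hmid' : (i : ℕ) ≤ mid := by simp only [mid]; omega
    have hcard (v : G.V) : (insert v c).ncard ≤ c.ncard + 1 := Set.ncard_insert_le v c
    have to_mid : G.RevReach (c.ncard + (n + 1) + 1 + e) c (insert (f mid) c) :=
      (ih i mid c hmid' hmid hc).mono (by omega)
    have mid_to_j : G.RevReach (c.ncard + (n + 1) + 1 + e)
        (insert (f mid) c) (insert (f j) (insert (f mid) c)) := by
      refine (ih ⟨i + 2 ^ n, by omega⟩ j _ (by simp; omega) (by simp; omega)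
        fun l hl => ?_).mono (by have := hcard (f mid); omega)
      obtain rfl : l = mid := Fin.ext (by simp only [mid] at hl ⊢; omega)
      exact Set.mem_insert _ _
    have j_to_mid : G.RevReach (c.ncard + (n + 1) + 1 + e)
        (insert (f j) c) (insert (f mid) (insert (f j) c)) :=
      (ih i mid _ hmid' hmid fun l hl => Set.mem_insert_of_mem _ (hc l hl)).mono
        (by have := hcard (f j); omega)
    rw [Set.insert_comm] at j_to_mid
    exact to_mid.trans (mid_to_j.trans (j_to_mid.symm hG))

end FinDigraph

namespace BRGraph

open FinDigraph

variable {m : ℕ}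

theorem edge_irrefl (v : (BRGraph m).V) : ¬ (BRGraph m).Edge v v := by
  rcases v with k | k <;> exact fun h : (k : ℕ) = k + 1 => by omega

theorem pred_inl_subset {k : Fin (2 ^ m)} {c : Set (BRGraph m).V}
    (h : ∀ l : Fin (2 ^ m), (k : ℕ) = l + 1 → (.inl l : (BRGraph m).V) ∈ c) :
    (BRGraph m).pred (.inl k) ⊆ c := by
  rintro (l | l) hl
  · exact h l hl
  · exact hl.elim

theorem pred_inr_subset {k : Fin (2 ^ m)} {c : Set (BRGraph m).V}
    (h : ∀ l : Fin (2 ^ m), (k : ℕ) = l + 1 → (.inr l : (BRGraph m).V) ∈ c)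
    (hσ : (.inl ⟨bitRev m k, bitRev_lt m k⟩ : (BRGraph m).V) ∈ c) :
    (BRGraph m).pred (.inr k) ⊆ c := by
  rintro (l | l) hl
  · obtain rfl : l = ⟨bitRev m k, bitRev_lt m k⟩ := by
      ext
      change (k : ℕ) = bitRev m l at hl
      change (l : ℕ) = bitRev m k
      rw [hl, bitRev_bitRev l.isLt]
    exact hσ
  · exact h l hl

theorem revReach_insert_inl (c : Set (BRGraph m).V) (k : Fin (2 ^ m)) :
    (BRGraph m).RevReach (c.ncard + m + 1) c (insert (.inl k : (BRGraph m).V) c) :=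
  revReach_insert_path edge_irrefl (e := 0) Sum.inl
    (fun _ c hc => revReach_insert (pred_inl_subset hc) (Set.ncard_insert_le _ c))
    m 0 k c (Fin.zero_le _) (by simp) (by simp)

theorem revReach_insert_inr (c : Set (BRGraph m).V) (k : Fin (2 ^ m)) :
    (BRGraph m).RevReach (c.ncard + 2 * m + 2) c (insert (.inr k : (BRGraph m).V) c) := by
  refine (revReach_insert_path edge_irrefl (e := m + 1) Sum.inr (fun k c hc => ?_) m 0 k c
    (Fin.zero_le _) (by simp) (by simp)).mono (by omega)
  set x : (BRGraph m).V := .inl ⟨bitRev m k, bitRev_lt m k⟩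
  set y : (BRGraph m).V := .inr k
  have place_x : (BRGraph m).RevReach (c.ncard + 1 + (m + 1)) c (insert x c) :=
    (revReach_insert_inl c _).mono (by omega)
  have place_y : (BRGraph m).RevReach (c.ncard + 1 + (m + 1))
      (insert x c) (insert y (insert x c)) := by
    refine revReach_insert (pred_inr_subset (fun l hl => Set.mem_insert_of_mem _ (hc l hl))
      (Set.mem_insert _ _)) ?_
    have := Set.ncard_insert_le y (insert x c)
    have := Set.ncard_insert_le x c
    omega
  have unplace_x : (BRGraph m).RevReach (c.ncard + 1 + (m + 1))
      (insert y c) (insert x (insert y c)) := by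
    refine (revReach_insert_inl _ _).mono ?_
    have := Set.ncard_insert_le y c
    omega
  rw [Set.insert_comm] at unplace_x
  exact place_x.trans (place_y.trans (unplace_x.symm edge_irrefl))

end BRGraph

theorem bit_reversal_reversible_pebbling_price_general (m : ℕ) :
    ∃ (t : ℕ) (P : ℕ → Set (BRGraph m).V),
      (BRGraph m).IsRevPebbling (brSink m) t P ∧
      (BRGraph m).space t P ≤ 2 * m + 2 := by
  have h := BRGraph.revReach_insert_inr ∅ ⟨2 ^ m - 1, Nat.sub_lt (Nat.two_pow_pos m) one_pos⟩
  rw [Set.ncard_empty, zero_add] at h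
  exact FinDigraph.exists_isRevPebbling_of_revReach BRGraph.edge_irrefl h (Set.mem_insert _ _)

/-- For `n = 2^m` with `m ≥ 1`, the bit-reversal permutation graph on `2n`
vertices has reversible pebbling price at most `2 * log₂ n + 2 = 2 * m + 2`. -/
theorem bit_reversal_reversible_pebbling_price (m : ℕ) (hm : 1 ≤ m) :
    ∃ (t : ℕ) (P : ℕ → Set (BRGraph m).V),
      (BRGraph m).IsRevPebbling (brSink m) t P ∧
      (BRGraph m).space t P ≤ 2 * m + 2 :=
  bit_reversal_reversible_pebbling_price_general m
end
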